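/- arXiv:2203.12675 — 7 statements merged into one kernel-verified Lean document; each statement's English description precedes it below -/
import Mathlib

section
/- For every t ∈ ℝ^n, the moment generating function of the FMS mutation vector z satisfies E[exp(⟨t, z⟩)] = exp(½(1−γ)‖t‖²) · (Σ_{j=1}^m α_j · exp((γ/(2l))·⟨t, q_j⟩²))^l; in particular this expectation is finite. -/
open MeasureTheory ProbabilityTheory
open scoped RealInnerProductSpace

noncomputable section

/-- Index type for the independent ingredients of the FMS sampler: the `n` coordinates of the
isotropic Gaussian vector `z₀`, the `l` Gaussian mixing scalars `z_1, …, z_l`, and the `l`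
random indices `i_1, …, i_l`. -/
abbrev FMSIndex (n l : ℕ) := (Fin n) ⊕ (Fin l) ⊕ (Fin l)

/-- Codomains of the independent ingredients of the FMS sampler. -/
def FMSCodomain (n m l : ℕ) : FMSIndex n l → Type
  | Sum.inl _ => ℝ
  | Sum.inr (Sum.inl _) => ℝ
  | Sum.inr (Sum.inr _) => Fin m

instance FMSCodomain.instMeasurableSpace (n m l : ℕ) (k : FMSIndex n l) :
    MeasurableSpace (FMSCodomain n m l k) := by
  rcases k with i | j | j
  · exact inferInstanceAs (MeasurableSpace ℝ)
  · exact inferInstanceAs (MeasurableSpace ℝ)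
  · exact inferInstanceAs (MeasurableSpace (Fin m))

/-- The family consisting of the coordinates of `z₀`, the scalars `zs j`, and the indices
`idx j`, whose mutual independence is the independence assumption of the FMS setup. -/
def FMSFamily {n m l : ℕ} {Ω : Type*}
    (z₀ : Ω → EuclideanSpace ℝ (Fin n)) (zs : Fin l → Ω → ℝ)
    (idx : Fin l → Ω → Fin m) :
    ∀ k : FMSIndex n l, Ω → FMSCodomain n m l k
  | Sum.inl i => fun ω => z₀ ω i
  | Sum.inr (Sum.inl j) => zs j
  | Sum.inr (Sum.inr j) => idx j

section AuxFMS
open Real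

lemma aux_gauss_pdf_mul (c x : ℝ) :
    gaussianPDFReal 0 1 x * rexp (c * x)
      = ((√(2 * π))⁻¹ * rexp (c ^ 2 / 2)) * rexp (-(1/2) * (x - c) ^ 2) := by
  simp only [gaussianPDFReal, NNReal.coe_one, mul_one, sub_zero]
  rw [mul_assoc, ← Real.exp_add, mul_assoc, ← Real.exp_add]
  congr 1
  · ring

lemma aux_gauss_int (c : ℝ) :
    Integrable (fun x => gaussianPDFReal 0 1 x * rexp (c * x)) (volume : Measure ℝ) := by
  simp only [aux_gauss_pdf_mul]
  exact ((integrable_exp_neg_mul_sq (by norm_num : (0:ℝ) < 1/2)).comp_sub_right c).const_mul _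

lemma aux_gauss_eval (c : ℝ) :
    ∫ x, gaussianPDFReal 0 1 x * rexp (c * x) = rexp (c ^ 2 / 2) := by
  simp only [aux_gauss_pdf_mul]
  rw [integral_const_mul, integral_sub_right_eq_self (fun x => rexp (-(1/2) * x ^ 2)) c,
    integral_gaussian]
  have h2π : (0:ℝ) < 2 * π := by positivity
  rw [show π / (1/2) = 2 * π by ring]
  field_simp

lemma aux_gaussianReal_withDensity :
    gaussianReal 0 1 = (volume : Measure ℝ).withDensity
      (fun x => ((gaussianPDFReal 0 1 x).toNNReal : ENNReal)) := by
  rw [gaussianReal_of_var_ne_zero 0 one_ne_zero]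
  rfl

lemma aux_mgf_gaussian (c : ℝ) :
    Integrable (fun x => rexp (c * x)) (gaussianReal 0 1) ∧
      ∫ x, rexp (c * x) ∂(gaussianReal 0 1) = rexp (c ^ 2 / 2) := by
  have hmeas : Measurable fun x => (gaussianPDFReal 0 1 x).toNNReal :=
    (measurable_gaussianPDFReal 0 1).real_toNNReal
  have hnn : ∀ x, ((gaussianPDFReal 0 1 x).toNNReal : ℝ) = gaussianPDFReal 0 1 x :=
    fun x => Real.coe_toNNReal _ (gaussianPDFReal_nonneg 0 1 x)
  constructor
  · rw [aux_gaussianReal_withDensity,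
      integrable_withDensity_iff_integrable_coe_smul hmeas]
    simp only [NNReal.smul_def, smul_eq_mul, hnn]
    exact aux_gauss_int c
  · rw [aux_gaussianReal_withDensity, integral_withDensity_eq_integral_smul hmeas]
    simp only [NNReal.smul_def, smul_eq_mul, hnn]
    exact aux_gauss_eval c

lemma aux_mgf_transfer {Ω : Type*} [MeasurableSpace Ω] {P : Measure Ω}
    [IsProbabilityMeasure P] {X : Ω → ℝ} (h : Measure.map X P = gaussianReal 0 1) (c : ℝ) :
    Integrable (fun ω => rexp (c * X ω)) P ∧
      ∫ ω, rexp (c * X ω) ∂P = rexp (c ^ 2 / 2) := by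
  have hX : AEMeasurable X P := by
    by_contra hc
    have := Measure.map_of_not_aemeasurable hc
    rw [this] at h
    have : (gaussianReal 0 1) Set.univ = 1 := measure_univ
    rw [← h] at this
    simp at this
  have hg : AEStronglyMeasurable (fun x => rexp (c * x)) (Measure.map X P) :=
    (Real.continuous_exp.comp (continuous_const.mul continuous_id)).aestronglyMeasurable
  constructor
  · have := (aux_mgf_gaussian c).1
    rw [← h] at this
    exact (integrable_map_measure hg hX).mp this
  · have := (aux_mgf_gaussian c).2
    rw [← h, integral_map hX hg] at this
    exact this

lemma aux_prod_indep {ι : Type*} {Ω : Type*} [MeasurableSpace Ω] {P : Measure Ω}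
    [IsProbabilityMeasure P] {W : ι → Ω → ℝ}
    (hindep : iIndepFun W P) (hmeas : ∀ i, Measurable (W i))
    (s : Finset ι) (hint : ∀ i ∈ s, Integrable (W i) P) :
    Integrable (fun ω => ∏ i ∈ s, W i ω) P ∧
      (∫ ω, ∏ i ∈ s, W i ω ∂P) = ∏ i ∈ s, ∫ ω, W i ω ∂P := by
  classical
  induction s using Finset.induction_on with
  | empty => simp
  | @insert i s hi ih =>
    obtain ⟨ih1, ih2⟩ := ih (fun j hj => hint j (Finset.mem_insert_of_mem hj))
    have hii : IndepFun (∏ j ∈ s, W j) (W i) P :=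
      hindep.indepFun_finsetProd_of_notMem hmeas hi
    have hWi : Integrable (W i) P := hint i (Finset.mem_insert_self i s)
    have hps : (fun ω => ∏ j ∈ s, W j ω) = ∏ j ∈ s, W j := by
      funext ω; simp [Finset.prod_apply]
    have hint2 : Integrable ((∏ j ∈ s, W j) * W i) P := by
      refine hii.integrable_mul ?_ hWi
      rw [← hps]; exact ih1
    have hkey : (fun ω => ∏ j ∈ insert i s, W j ω) = (∏ j ∈ s, W j) * W i := by
      funext ω
      simp only [Finset.prod_insert hi, Pi.mul_apply, Finset.prod_apply]
      ring
    constructor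
    · rw [hkey]; exact hint2
    · rw [hkey, hii.integral_mul_eq_mul_integral (hps ▸ ih1).aestronglyMeasurable hWi.aestronglyMeasurable, Finset.prod_insert hi]
      rw [← hps, ih2]
      ring

lemma aux_idx_aemeasurable {Ω : Type*} [MeasurableSpace Ω] {P : Measure Ω}
    [IsProbabilityMeasure P] {m : ℕ} {g : Ω → Fin m} {α : Fin m → ℝ}
    (hα0 : ∀ k, 0 ≤ α k) (hsum : ∑ k, α k = 1)
    (h : ∀ k, P {ω | g ω = k} = ENNReal.ofReal (α k)) :
    AEMeasurable g P := by
  classical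
  set A : Fin m → Set Ω := fun k => g ⁻¹' {k} with hA
  have hAeq : ∀ k, A k = {ω | g ω = k} := fun k => rfl
  set B : Fin m → Set Ω := fun k => toMeasurable P (A k) with hB
  have hAB : ∀ k, A k ⊆ B k := fun k => subset_toMeasurable _ _
  have hBm : ∀ k, MeasurableSet (B k) := fun k => measurableSet_toMeasurable _ _
  have hPB : ∀ k, P (B k) = ENNReal.ofReal (α k) := by
    intro k; rw [hB]; simp only [measure_toMeasurable]; rw [hAeq]; exact h k
  have hsumB : ∑ k, P (B k) = 1 := by
    simp only [hPB]
    rw [← ENNReal.ofReal_sum_of_nonneg (fun k _ => hα0 k), hsum, ENNReal.ofReal_one]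
  have hcover : (⋃ k, A k) = Set.univ := by
    ext ω; simp only [Set.mem_iUnion, Set.mem_univ, iff_true]
    exact ⟨g ω, rfl⟩
  have huniv : P (⋃ k, B k) = 1 := by
    refine le_antisymm prob_le_one ?_
    calc (1 : ENNReal) = P Set.univ := measure_univ.symm
    _ ≤ P (⋃ k, B k) := by
        refine measure_mono ?_
        rw [← hcover]
        exact Set.iUnion_mono hAB
  -- pairwise intersections are null
  have hpair : ∀ k k', k ≠ k' → P (B k ∩ B k') = 0 := by
    intro k k' hkk'
    have hsub : ({k, k'} : Finset (Fin m)) ⊆ Finset.univ := Finset.subset_univ _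
    have hsplit : ∑ j, P (B j)
        = P (B k) + P (B k') + ∑ j ∈ Finset.univ \ {k, k'}, P (B j) := by
      rw [← Finset.sum_sdiff hsub, Finset.sum_pair hkk']
      ring
    have hle : P (⋃ j, B j) ≤ P (B k ∪ B k') + ∑ j ∈ Finset.univ \ {k, k'}, P (B j) := by
      have : (⋃ j, B j) ⊆ (B k ∪ B k') ∪ ⋃ j ∈ (Finset.univ \ {k, k'} : Finset (Fin m)), B j := by
        intro ω hω
        obtain ⟨j, hj⟩ := Set.mem_iUnion.mp hω
        by_cases hjk : j = k
        · exact Or.inl (Or.inl (hjk ▸ hj))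
        by_cases hjk' : j = k'
        · exact Or.inl (Or.inr (hjk' ▸ hj))
        · exact Or.inr (Set.mem_biUnion
            (Finset.mem_sdiff.mpr ⟨Finset.mem_univ j, by simp [hjk, hjk']⟩) hj)
      calc P (⋃ j, B j) ≤ P ((B k ∪ B k') ∪ ⋃ j ∈ (Finset.univ \ {k, k'} : Finset (Fin m)), B j) :=
            measure_mono this
      _ ≤ P (B k ∪ B k') + P (⋃ j ∈ (Finset.univ \ {k, k'} : Finset (Fin m)), B j) :=
            measure_union_le _ _
      _ ≤ P (B k ∪ B k') + ∑ j ∈ Finset.univ \ {k, k'}, P (B j) := by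
            gcongr
            exact measure_biUnion_finset_le _ _
    have hkey : (1 : ENNReal) + P (B k ∩ B k') ≤ 1 := by
      calc (1 : ENNReal) + P (B k ∩ B k')
          = P (⋃ j, B j) + P (B k ∩ B k') := by rw [huniv]
      _ ≤ P (B k ∪ B k') + ∑ j ∈ Finset.univ \ {k, k'}, P (B j) + P (B k ∩ B k') := by
            gcongr
      _ = (P (B k ∪ B k') + P (B k ∩ B k')) + ∑ j ∈ Finset.univ \ {k, k'}, P (B j) := by ring
      _ = (P (B k) + P (B k')) + ∑ j ∈ Finset.univ \ {k, k'}, P (B j) := by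
            rw [measure_union_add_inter _ (hBm k')]
      _ = ∑ j, P (B j) := by rw [hsplit]
      _ = 1 := hsumB
    have hx := ENNReal.le_of_add_le_add_left (show (1:ENNReal) ≠ ⊤ by simp)
      (hkey.trans_eq (by simp : (1:ENNReal) = 1 + 0))
    exact le_antisymm hx zero_le
  -- B k \ A k is null
  have hdiff : ∀ k, P (B k \ A k) = 0 := by
    intro k
    have hsub : B k \ A k ⊆ ⋃ k' ∈ ({k}ᶜ : Set (Fin m)), B k ∩ B k' := by
      intro ω hω
      have hωA : ω ∈ A (g ω) := rfl
      have hne : g ω ≠ k := fun hh => hω.2 (by simpa [hA, hh] using hωA)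
      exact Set.mem_biUnion hne ⟨hω.1, hAB _ hωA⟩
    refine measure_mono_null hsub ?_
    refine (measure_biUnion_null_iff (Set.to_countable _)).mpr ?_
    intro k' hk'
    exact hpair k k' (fun hh => hk' (by simp [hh]))
  have hAnull : ∀ k, NullMeasurableSet (A k) P := by
    intro k
    refine (hBm k).nullMeasurableSet.congr ?_
    rw [Filter.eventuallyEq_set]
    have hthis : ∀ᵐ ω ∂P, ω ∉ B k \ A k := by
      rw [← measure_eq_zero_iff_ae_notMem]
      exact hdiff k
    filter_upwards [hthis] with ω hω
    constructor
    · intro hB'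
      by_contra hA'
      exact hω ⟨hB', hA'⟩
    · intro hA'
      exact hAB k hA'
  have hnm : NullMeasurable g P := by
    intro s _
    have : g ⁻¹' s = ⋃ k ∈ s, A k := by
      ext ω
      simp only [Set.mem_preimage, Set.mem_iUnion, hA, Set.mem_setOf_eq]
      constructor
      · intro hh; exact ⟨g ω, hh, rfl⟩
      · rintro ⟨k, hk, hgk⟩
        rw [Set.mem_singleton_iff] at hgk
        exact hgk ▸ hk
    rw [this]
    exact NullMeasurableSet.biUnion (Set.to_countable s) (fun k _ => hAnull k)
  exact hnm.aemeasurable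

lemma aux_aemeasurable_of_map_gaussian {Ω : Type*} [MeasurableSpace Ω] {P : Measure Ω}
    {X : Ω → ℝ} (h : Measure.map X P = gaussianReal 0 1) : AEMeasurable X P := by
  by_contra hc
  have h0 := Measure.map_of_not_aemeasurable hc
  rw [h0] at h
  have h1 : (gaussianReal 0 1) Set.univ = 1 := measure_univ
  rw [← h] at h1
  simp at h1

def FMSg {n m l : ℕ} (a b : ℝ) (t : EuclideanSpace ℝ (Fin n))
    (q : Fin m → EuclideanSpace ℝ (Fin n)) (σ : Fin l → Fin m) :
    ∀ k : FMSIndex n l, FMSCodomain n m l k → ℝ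
  | Sum.inl i => fun x : ℝ => Real.exp (a * t i * x)
  | Sum.inr (Sum.inl j) => fun x : ℝ => Real.exp (b * ⟪t, q (σ j)⟫ * x)
  | Sum.inr (Sum.inr j) => fun u : Fin m => if u = σ j then 1 else 0

lemma FMSg_measurable {n m l : ℕ} (a b : ℝ) (t : EuclideanSpace ℝ (Fin n))
    (q : Fin m → EuclideanSpace ℝ (Fin n)) (σ : Fin l → Fin m) (k : FMSIndex n l) :
    Measurable (FMSg a b t q σ k) := by
  rcases k with i | j | j
  · exact (measurable_id.const_mul _).exp
  · exact (measurable_id.const_mul _).exp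
  · intro s _; exact MeasurableSet.of_discrete (α := Fin m)

end AuxFMS

/-- **Lemma 1 (moment generating function of the FMS mixture).**
For every `t ∈ ℝ^n`, the moment generating function of the FMS mutation vector
`z = √(1−γ)·z₀ + √(γ/l)·∑_j z_j·q_{i_j}` satisfies
`E[exp ⟪t, z⟫] = exp(½(1−γ)‖t‖²) · (∑_j α_j exp((γ/(2l))⟪t, q_j⟫²))^l`;
in particular this expectation is finite (the integrand is integrable). -/
theorem fms_mgf
    {n m l : ℕ} (hn : 0 < n) (hm : 0 < m) (hl : 0 < l)
    (q : Fin m → EuclideanSpace ℝ (Fin n))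
    (α : Fin m → ℝ) (hα : ∀ k, α k ∈ Set.Ioo (0 : ℝ) 1) (hαsum : ∑ k, α k = 1)
    (γ : ℝ) (hγ : γ ∈ Set.Ioo (0 : ℝ) 1)
    {Ω : Type*} [MeasurableSpace Ω] (P : Measure Ω) [IsProbabilityMeasure P]
    (z₀ : Ω → EuclideanSpace ℝ (Fin n)) (zs : Fin l → Ω → ℝ) (idx : Fin l → Ω → Fin m)
    (hz₀ : ∀ i : Fin n, Measure.map (fun ω => z₀ ω i) P = gaussianReal 0 1)
    (hzs : ∀ j : Fin l, Measure.map (zs j) P = gaussianReal 0 1)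
    (hidx : ∀ (j : Fin l) (k : Fin m), P {ω | idx j ω = k} = ENNReal.ofReal (α k))
    (hindep : iIndepFun (m := fun k => FMSCodomain.instMeasurableSpace n m l k)
      (FMSFamily z₀ zs idx) P)
    (z : Ω → EuclideanSpace ℝ (Fin n))
    (hz : ∀ ω, z ω = Real.sqrt (1 - γ) • z₀ ω
        + Real.sqrt (γ / l) • ∑ j : Fin l, zs j ω • q (idx j ω))
    (t : EuclideanSpace ℝ (Fin n)) :
    Integrable (fun ω => Real.exp ⟪t, z ω⟫) P ∧
      ∫ ω, Real.exp ⟪t, z ω⟫ ∂P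
        = Real.exp ((1 - γ) / 2 * ‖t‖ ^ 2)
            * (∑ j : Fin m, α j * Real.exp (γ / (2 * l) * ⟪t, q j⟫ ^ 2)) ^ l := by
  classical
  set a : ℝ := Real.sqrt (1 - γ) with ha
  set b : ℝ := Real.sqrt (γ / l) with hb
  -- measurable modifications
  have hz₀ae : ∀ i, AEMeasurable (fun ω => z₀ ω i) P :=
    fun i => aux_aemeasurable_of_map_gaussian (hz₀ i)
  have hzsae : ∀ j, AEMeasurable (zs j) P :=
    fun j => aux_aemeasurable_of_map_gaussian (hzs j)
  have hidxae : ∀ j, AEMeasurable (idx j) P := fun j =>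
    aux_idx_aemeasurable (fun k => (hα k).1.le) hαsum (hidx j)
  set Z : Fin n → Ω → ℝ := fun i => (hz₀ae i).mk _ with hZ
  have hZm : ∀ i, Measurable (Z i) := fun i => (hz₀ae i).measurable_mk
  have hZe : ∀ i, (fun ω => z₀ ω i) =ᵐ[P] Z i := fun i => (hz₀ae i).ae_eq_mk
  set zs' : Fin l → Ω → ℝ := fun j => (hzsae j).mk _ with hzs'
  have hzs'm : ∀ j, Measurable (zs' j) := fun j => (hzsae j).measurable_mk
  have hzs'e : ∀ j, zs j =ᵐ[P] zs' j := fun j => (hzsae j).ae_eq_mk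
  set idx' : Fin l → Ω → Fin m := fun j => (hidxae j).mk _ with hidx'
  have hidx'm : ∀ j, Measurable (idx' j) := fun j => (hidxae j).measurable_mk
  have hidx'e : ∀ j, idx j =ᵐ[P] idx' j := fun j => (hidxae j).ae_eq_mk
  set z₀' : Ω → EuclideanSpace ℝ (Fin n) := fun ω => WithLp.toLp 2 (fun i => Z i ω) with hz₀'
  set F := FMSFamily z₀ zs idx with hF
  set F' := FMSFamily z₀' zs' idx' with hF'
  have hae : ∀ k : FMSIndex n l, F k =ᵐ[P] F' k := by
    rintro (i | j | j)
    · exact hZe i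
    · exact hzs'e j
    · exact hidx'e j
  have hF'm : ∀ k : FMSIndex n l, Measurable (F' k) := by
    rintro (i | j | j)
    · exact hZm i
    · exact hzs'm j
    · exact hidx'm j
  have hall : ∀ᵐ ω ∂P, ∀ k : FMSIndex n l, F k ω = F' k ω := ae_all_iff.mpr hae
  -- independence of the modified family
  have hindep' : iIndepFun (m := fun k => FMSCodomain.instMeasurableSpace n m l k) F' P := by
    rw [iIndepFun_iff_measure_inter_preimage_eq_mul]
    intro S sets H
    have h1 : P (⋂ k ∈ S, F' k ⁻¹' sets k) = P (⋂ k ∈ S, F k ⁻¹' sets k) := by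
      apply measure_congr
      rw [Filter.eventuallyEq_set]
      filter_upwards [hall] with ω hω
      simp only [Set.mem_iInter, Set.mem_preimage]
      constructor <;> intro hh k hk
      · rw [hω k]; exact hh k hk
      · rw [← hω k]; exact hh k hk
    have h2 : ∀ k ∈ S, P (F' k ⁻¹' sets k) = P (F k ⁻¹' sets k) := by
      intro k hk
      apply measure_congr
      rw [Filter.eventuallyEq_set]
      filter_upwards [hae k] with ω hω
      simp only [Set.mem_preimage, hω]
    rw [h1, hindep.measure_inter_preimage_eq_mul S H]
    exact Finset.prod_congr rfl fun k hk => (h2 k hk).symm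
  -- the laws of the modified variables
  have hZlaw : ∀ i, Measure.map (Z i) P = gaussianReal 0 1 :=
    fun i => (Measure.map_congr (hZe i)).symm.trans (hz₀ i)
  have hzs'law : ∀ j, Measure.map (zs' j) P = gaussianReal 0 1 :=
    fun j => (Measure.map_congr (hzs'e j)).symm.trans (hzs j)
  have hidx'law : ∀ j k, P {ω | idx' j ω = k} = ENNReal.ofReal (α k) := by
    intro j k
    have : P {ω | idx' j ω = k} = P {ω | idx j ω = k} := by
      apply measure_congr
      rw [Filter.eventuallyEq_set]
      filter_upwards [hidx'e j] with ω hω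
      simp only [Set.mem_setOf_eq, hω]
    rw [this, hidx j k]
  -- the factor functions
  set g : (Fin l → Fin m) → ∀ k : FMSIndex n l, FMSCodomain n m l k → ℝ :=
    fun σ => FMSg a b t q σ with hg
  have hgm : ∀ σ k, Measurable (g σ k) := fun σ k => FMSg_measurable a b t q σ k
  set W : (Fin l → Fin m) → ∀ k : FMSIndex n l, Ω → ℝ :=
    fun σ k => g σ k ∘ F' k with hW
  have hWindep : ∀ σ, iIndepFun (W σ) P :=
    fun σ => hindep'.comp (g σ) (hgm σ)
  have hWm : ∀ σ k, Measurable (W σ k) := fun σ k => (hgm σ k).comp (hF'm k)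
  have hWint : ∀ σ k, Integrable (W σ k) P := by
    rintro σ (i | j | j)
    · exact (aux_mgf_transfer (hZlaw i) (a * t i)).1
    · exact (aux_mgf_transfer (hzs'law j) (b * ⟪t, q (σ j)⟫)).1
    · have hWeq : W σ (Sum.inr (Sum.inr j))
          = Set.indicator (idx' j ⁻¹' {σ j}) (fun _ => (1:ℝ)) := by
        funext ω
        simp only [hW, Function.comp, Set.indicator_apply, Set.mem_preimage,
          Set.mem_singleton_iff]
        rfl
      rw [hWeq]
      exact (integrable_const (1:ℝ)).indicator ((hidx'm j) (measurableSet_singleton _))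
  have hWeval : ∀ σ : Fin l → Fin m,
      (∀ i : Fin n, ∫ ω, W σ (Sum.inl i) ω ∂P = Real.exp ((a * t i) ^ 2 / 2)) ∧
      (∀ j : Fin l, ∫ ω, W σ (Sum.inr (Sum.inl j)) ω ∂P
          = Real.exp ((b * ⟪t, q (σ j)⟫) ^ 2 / 2)) ∧
      (∀ j : Fin l, ∫ ω, W σ (Sum.inr (Sum.inr j)) ω ∂P = α (σ j)) := by
    intro σ
    refine ⟨fun i => (aux_mgf_transfer (hZlaw i) (a * t i)).2,
      fun j => (aux_mgf_transfer (hzs'law j) (b * ⟪t, q (σ j)⟫)).2, fun j => ?_⟩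
    have hWeq : W σ (Sum.inr (Sum.inr j))
        = Set.indicator (idx' j ⁻¹' {σ j}) (fun _ => (1:ℝ)) := by
      funext ω
      simp only [hW, Function.comp, Set.indicator_apply, Set.mem_preimage,
        Set.mem_singleton_iff]
      rfl
    rw [hWeq, integral_indicator_const _ ((hidx'm j) (measurableSet_singleton _))]
    have : idx' j ⁻¹' {σ j} = {ω | idx' j ω = σ j} := rfl
    rw [this, measureReal_def, hidx'law j (σ j), smul_eq_mul, mul_one,
      ENNReal.toReal_ofReal (hα (σ j)).1.le]
  -- pointwise expansion with the original variables
  have hpoint : ∀ ω, Real.exp ⟪t, z ω⟫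
      = ∑ σ : Fin l → Fin m, ∏ k : FMSIndex n l, (g σ k ∘ F k) ω := by
    intro ω
    have hsum' : ⟪t, ∑ j : Fin l, zs j ω • q (idx j ω)⟫
        = ∑ j, zs j ω * ⟪t, q (idx j ω)⟫ := by
      rw [inner_sum]
      exact Finset.sum_congr rfl fun j _ => real_inner_smul_right _ _ _
    have hinner : ⟪t, z ω⟫ = a * ⟪t, z₀ ω⟫ + b * ∑ j, zs j ω * ⟪t, q (idx j ω)⟫ := by
      rw [hz ω, inner_add_right, real_inner_smul_right, real_inner_smul_right, hsum']
    have hinner0 : ⟪t, z₀ ω⟫ = ∑ i, t i * z₀ ω i := by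
      simp [PiLp.inner_apply, RCLike.inner_apply, conj_trivial, mul_comm]
    have hstep3 : ∀ j, Real.exp (b * ⟪t, q (idx j ω)⟫ * zs j ω)
        = ∑ k, (if idx j ω = k then (1:ℝ) else 0) * Real.exp (b * ⟪t, q k⟫ * zs j ω) := by
      intro j
      simp [ite_mul, Finset.sum_ite_eq]
    calc Real.exp ⟪t, z ω⟫
        = (∏ i, Real.exp (a * t i * z₀ ω i))
            * ∏ j, Real.exp (b * ⟪t, q (idx j ω)⟫ * zs j ω) := by
          rw [hinner, Real.exp_add, hinner0, Finset.mul_sum, Finset.mul_sum,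
            Real.exp_sum, Real.exp_sum]
          congr 1
          · exact Finset.prod_congr rfl fun i _ => by ring_nf
          · exact Finset.prod_congr rfl fun j _ => by ring_nf
      _ = (∏ i, Real.exp (a * t i * z₀ ω i))
            * ∏ j, ∑ k, (if idx j ω = k then (1:ℝ) else 0)
                * Real.exp (b * ⟪t, q k⟫ * zs j ω) := by
          congr 1
          exact Finset.prod_congr rfl fun j _ => hstep3 j
      _ = ∑ σ : Fin l → Fin m, (∏ i, Real.exp (a * t i * z₀ ω i))
            * ∏ j, (if idx j ω = σ j then (1:ℝ) else 0)
                * Real.exp (b * ⟪t, q (σ j)⟫ * zs j ω) := by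
          rw [Finset.prod_univ_sum, Fintype.piFinset_univ, Finset.mul_sum]
      _ = ∑ σ : Fin l → Fin m, ∏ k : FMSIndex n l, (g σ k ∘ F k) ω := by
          refine Finset.sum_congr rfl fun σ _ => ?_
          rw [Fintype.prod_sum_type, Fintype.prod_sum_type, Finset.prod_mul_distrib]
          simp only [hg, hF, Function.comp, FMSg, FMSFamily]
          ring
  -- almost-everywhere identification with the modified summands
  have haeW : (fun ω => Real.exp ⟪t, z ω⟫)
      =ᵐ[P] (fun ω => ∑ σ : Fin l → Fin m, ∏ k : FMSIndex n l, W σ k ω) := by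
    filter_upwards [hall] with ω hω
    rw [hpoint ω]
    refine Finset.sum_congr rfl fun σ _ => Finset.prod_congr rfl fun k _ => ?_
    simp only [hW, Function.comp, hω k]
  -- product formula for each summand
  have hsummand : ∀ σ : Fin l → Fin m,
      Integrable (fun ω => ∏ k : FMSIndex n l, W σ k ω) P ∧
      (∫ ω, ∏ k : FMSIndex n l, W σ k ω ∂P)
        = ∏ k : FMSIndex n l, ∫ ω, W σ k ω ∂P :=
    fun σ => aux_prod_indep (hWindep σ) (hWm σ) Finset.univ (fun k _ => hWint σ k)
  have hInt : Integrable (fun ω => ∑ σ : Fin l → Fin m, ∏ k : FMSIndex n l, W σ k ω) P :=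
    integrable_finset_sum _ (fun σ _ => (hsummand σ).1)
  constructor
  · exact hInt.congr haeW.symm
  -- evaluation
  have h1γ : (0:ℝ) ≤ 1 - γ := by linarith [hγ.2]
  have ha2 : a ^ 2 = 1 - γ := Real.sq_sqrt h1γ
  have hb2 : b ^ 2 = γ / l := Real.sq_sqrt (div_nonneg hγ.1.le (Nat.cast_nonneg l))
  have hnorm : ‖t‖ ^ 2 = ∑ i, t i ^ 2 := by
    rw [EuclideanSpace.norm_eq, Real.sq_sqrt (Finset.sum_nonneg fun i _ => sq_nonneg _)]
    simp [Real.norm_eq_abs, sq_abs]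
  have hprodval : ∀ σ : Fin l → Fin m,
      (∏ k : FMSIndex n l, ∫ ω, W σ k ω ∂P)
        = Real.exp ((1 - γ) / 2 * ‖t‖ ^ 2)
            * ∏ j : Fin l, (α (σ j) * Real.exp (γ / (2 * l) * ⟪t, q (σ j)⟫ ^ 2)) := by
    intro σ
    obtain ⟨e1, e2, e3⟩ := hWeval σ
    rw [Fintype.prod_sum_type, Fintype.prod_sum_type]
    have hE0 : (∏ i, ∫ ω, W σ (Sum.inl i) ω ∂P) = Real.exp ((1 - γ) / 2 * ‖t‖ ^ 2) := by
      rw [Finset.prod_congr rfl fun i _ => e1 i, ← Real.exp_sum]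
      congr 1
      rw [hnorm, Finset.mul_sum]
      refine Finset.sum_congr rfl fun i _ => ?_
      rw [mul_pow, ha2]
      ring
    have hE1 : ∀ j, ∫ ω, W σ (Sum.inr (Sum.inl j)) ω ∂P
        = Real.exp (γ / (2 * l) * ⟪t, q (σ j)⟫ ^ 2) := by
      intro j
      rw [e2 j]
      congr 1
      rw [mul_pow, hb2]
      ring
    rw [hE0, Finset.prod_congr rfl fun j _ => hE1 j, Finset.prod_congr rfl fun j _ => e3 j,
      ← Finset.prod_mul_distrib]
    congr 1
    exact Finset.prod_congr rfl fun j _ => by ring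
  rw [integral_congr_ae haeW, integral_finset_sum _ (fun σ _ => (hsummand σ).1)]
  calc (∑ σ : Fin l → Fin m, ∫ ω, ∏ k : FMSIndex n l, W σ k ω ∂P)
      = ∑ σ : Fin l → Fin m, Real.exp ((1 - γ) / 2 * ‖t‖ ^ 2)
          * ∏ j : Fin l, (α (σ j) * Real.exp (γ / (2 * l) * ⟪t, q (σ j)⟫ ^ 2)) := by
        exact Finset.sum_congr rfl fun σ _ => ((hsummand σ).2).trans (hprodval σ)
    _ = Real.exp ((1 - γ) / 2 * ‖t‖ ^ 2)
          * ∑ σ : Fin l → Fin m, ∏ j : Fin l,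
              (α (σ j) * Real.exp (γ / (2 * l) * ⟪t, q (σ j)⟫ ^ 2)) := by
        rw [Finset.mul_sum]
    _ = Real.exp ((1 - γ) / 2 * ‖t‖ ^ 2)
          * (∑ k : Fin m, α k * Real.exp (γ / (2 * l) * ⟪t, q k⟫ ^ 2)) ^ l := by
        congr 1
        rw [← Fintype.piFinset_univ, ← Finset.prod_univ_sum
          (fun _ : Fin l => (Finset.univ : Finset (Fin m)))
          (fun _ k => α k * Real.exp (γ / (2 * l) * ⟪t, q k⟫ ^ 2))]
        rw [Finset.prod_const, Finset.card_univ, Fintype.card_fin]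


end
end

section
/- For every t ∈ ℝ^n, M_l(t) → exp(½⟨t, C_a t⟩) = U(t) as the mixing strength l → ∞ (limit over positive integers l); that is, the moment generating function of the FMS mixture distribution converges pointwise to the moment generating function of the target Gaussian distribution 𝒫_a. -/
open Filter Topology
open scoped RealInnerProductSpace

/-- **Theorem 1 (convergence of the FMS mixture to the target Gaussian).**
Under the parameter setting `γ = 1 − (1−c_a)^m`, `α_k = c_a(1−c_a)^{m−k}/(1−(1−c_a)^m)`
(Eq. 7), for every `t ∈ ℝ^n` the moment generating function
`M_l(t) = exp(½(1−γ)‖t‖²) (∑_j α_j exp((γ/(2l))⟪t,q_j⟫²))^l` of the FMS mixture `𝒫_m`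
converges, as the mixing strength `l → ∞`, to
`U(t) = exp(½⟪t, C_a t⟫) = exp(½((1−c_a)^m‖t‖² + c_a ∑_j (1−c_a)^{m−j}⟪t,q_j⟫²))`, the
moment generating function of the target Gaussian `𝒫_a = N(0, C_a)`.
(Here `j, k : Fin m` are zero-based, so the paper's exponent `m − j` reads `m − 1 − j`.) -/
theorem fms_converges_to_gaussian {n m : ℕ} (hn : 0 < n) (hm : 0 < m)
    (q : Fin m → EuclideanSpace ℝ (Fin n))
    (c : ℝ) (hc : c ∈ Set.Ioo (0 : ℝ) 1)
    (γ : ℝ) (hγ : γ = 1 - (1 - c) ^ m)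
    (α : Fin m → ℝ)
    (hα : ∀ k : Fin m, α k = c * (1 - c) ^ (m - 1 - (k : ℕ)) / (1 - (1 - c) ^ m))
    (t : EuclideanSpace ℝ (Fin n)) :
    Tendsto
      (fun l : ℕ =>
        Real.exp ((1 - γ) / 2 * ‖t‖ ^ 2)
          * (∑ j : Fin m, α j * Real.exp (γ / (2 * l) * ⟪t, q j⟫ ^ 2)) ^ l)
      atTop
      (nhds (Real.exp (((1 - c) ^ m * ‖t‖ ^ 2
          + c * ∑ j : Fin m, (1 - c) ^ (m - 1 - (j : ℕ)) * ⟪t, q j⟫ ^ 2) / 2))) := by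
  obtain ⟨hc0, hc1⟩ := hc
  haveI : Nonempty (Fin m) := ⟨⟨0, hm⟩⟩
  have h1c0 : 0 < 1 - c := by linarith
  have h1c1 : 1 - c < 1 := by linarith
  have hpow : (1 - c) ^ m < 1 := pow_lt_one₀ h1c0.le h1c1 hm.ne'
  have hγ0 : 0 < γ := by rw [hγ]; linarith
  have hD : 1 - (1 - c) ^ m ≠ 0 := by linarith
  set x : Fin m → ℝ := fun j => ⟪t, q j⟫ ^ 2 with hx
  set b : Fin m → ℝ := fun j => γ * x j / 2 with hb
  have hαpos : ∀ j, 0 < α j := fun j => by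
    rw [hα]
    exact div_pos (by positivity) (by linarith)
  have hsum : ∑ j : Fin m, α j = 1 := by
    have hgeo : ∑ i ∈ Finset.range m, (1 - c) ^ i = (1 - (1 - c) ^ m) / c := by
      rw [geom_sum_eq (by intro h; simp at h; linarith : (1:ℝ) - c ≠ 1)]
      rw [div_eq_div_iff (by intro h; simp at h; linarith) hc0.ne']
      ring
    simp only [hα]
    rw [Fin.sum_univ_eq_sum_range (fun j => c * (1 - c) ^ (m - 1 - j) / (1 - (1 - c) ^ m)) m,
        Finset.sum_range_reflect (fun j => c * (1 - c) ^ j / (1 - (1 - c) ^ m)) m,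
        ← Finset.sum_div, ← Finset.mul_sum, hgeo]
    field_simp
  set F : ℝ → ℝ := fun u => ∑ j : Fin m, α j * Real.exp (b j * u) with hF
  have hFpos : ∀ u, 0 < F u := fun u =>
    Finset.sum_pos (fun j _ => mul_pos (hαpos j) (Real.exp_pos _)) Finset.univ_nonempty
  have hF0 : F 0 = 1 := by simp only [hF, mul_zero, Real.exp_zero, mul_one, hsum]
  set B : ℝ := ∑ j : Fin m, α j * b j with hB
  have hFd : HasDerivAt F B 0 := by
    have h : HasDerivAt F (∑ j : Fin m, α j * (Real.exp (b j * 0) * b j)) 0 := by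
      apply HasDerivAt.fun_sum
      intro j _
      have h1 : HasDerivAt (fun u : ℝ => b j * u) (b j) 0 := by
        simpa using (hasDerivAt_id (0:ℝ)).const_mul (b j)
      exact h1.exp.const_mul (α j)
    simpa [hB] using h
  have hgd : HasDerivAt (fun u => Real.log (F u)) B 0 := by
    have h := hFd.log (by rw [hF0]; norm_num)
    rwa [hF0, div_one] at h
  have hslope : Tendsto (fun u : ℝ => Real.log (F u) / u) (𝓝[≠] 0) (𝓝 B) := by
    have h := hasDerivAt_iff_tendsto_slope.mp hgd
    refine h.congr fun u => ?_
    simp [slope_def_field, hF0]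
  have hinv : Tendsto (fun l : ℕ => ((l : ℝ))⁻¹) atTop (𝓝[≠] (0:ℝ)) := by
    apply tendsto_nhdsWithin_of_tendsto_nhds_of_eventually_within
    · exact tendsto_inv_atTop_zero.comp tendsto_natCast_atTop_atTop
    · filter_upwards [eventually_ge_atTop 1] with l hl
      have hl0 : (0:ℝ) < (l:ℝ) := by exact_mod_cast hl
      simp only [Set.mem_compl_iff, Set.mem_singleton_iff]
      exact (inv_pos.mpr hl0).ne'
  have hmain : Tendsto
      (fun l : ℕ => (l:ℝ) * Real.log (∑ j : Fin m, α j * Real.exp (γ / (2 * l) * x j)))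
      atTop (𝓝 B) := by
    refine (hslope.comp hinv).congr' ?_
    filter_upwards [eventually_ge_atTop 1] with l hl
    have hl0 : ((l:ℝ)) ≠ 0 := by positivity
    have harg : ∀ j, b j * ((l:ℝ))⁻¹ = γ / (2 * l) * x j := fun j => by
      field_simp [hb]
      simp only [hb]; ring
    simp only [Function.comp, hF]
    rw [div_inv_eq_mul, mul_comm]
    have hSeq : (∑ j : Fin m, α j * Real.exp (b j * ((l:ℝ))⁻¹))
        = ∑ j : Fin m, α j * Real.exp (γ / (2 * (l:ℝ)) * x j) :=
      Finset.sum_congr rfl fun j _ => by rw [harg j]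
    rw [hSeq]
  have hterm : ∀ j : Fin m, α j * b j = c * (1 - c) ^ (m - 1 - (j:ℕ)) * x j / 2 := by
    intro j
    rw [hα, hb, hγ]
    field_simp
  have hlim : (1 - γ) / 2 * ‖t‖ ^ 2 + B
      = ((1 - c) ^ m * ‖t‖ ^ 2 + c * ∑ j : Fin m, (1 - c) ^ (m - 1 - (j:ℕ)) * x j) / 2 := by
    rw [hB, hγ]
    rw [Finset.sum_congr rfl fun j _ => hterm j]
    rw [Finset.mul_sum, ← Finset.sum_div]
    simp only [mul_assoc]
    ring
  rw [← hlim]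
  have hexp : Tendsto
      (fun l : ℕ => Real.exp ((1 - γ) / 2 * ‖t‖ ^ 2 + (l:ℝ) * Real.log (∑ j : Fin m, α j * Real.exp (γ / (2 * l) * x j))))
      atTop (𝓝 (Real.exp ((1 - γ) / 2 * ‖t‖ ^ 2 + B))) :=
    (Real.continuous_exp.tendsto _).comp (tendsto_const_nhds.add hmain)
  refine hexp.congr fun l => ?_
  have hS : (0:ℝ) < ∑ j : Fin m, α j * Real.exp (γ / (2 * l) * x j) :=
    Finset.sum_pos (fun j _ => mul_pos (hαpos j) (Real.exp_pos _)) Finset.univ_nonempty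
  rw [Real.exp_add, Real.exp_nat_mul, Real.exp_log hS]
end

section
/- For every t ∈ ℝ^n there exists a constant C ≥ 0 such that for every positive integer l, |M_l(t) − exp(½⟨t, C_a t⟩)| ≤ C / l; that is, the moment generating function of the FMS mixture with mixing strength l differs from that of the target Gaussian 𝒫_a by at most O(1/l). -/
open scoped RealInnerProductSpace


lemma exp_sub_one_le_mul_exp {u : ℝ} (hu : 0 ≤ u) :
    Real.exp u - 1 ≤ u * Real.exp u := by
  have h1 : 1 + (-u) ≤ Real.exp (-u) := by linarith [Real.add_one_le_exp (-u)]
  have h2 : Real.exp u * Real.exp (-u) = 1 := by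
    rw [← Real.exp_add]; simp
  nlinarith [Real.exp_pos u, mul_le_mul_of_nonneg_left h1 (Real.exp_pos u).le]

lemma exp_le_taylor2 {u : ℝ} (hu : 0 ≤ u) :
    Real.exp u ≤ 1 + u + u ^ 2 * Real.exp u := by
  have h1 := exp_sub_one_le_mul_exp hu
  nlinarith [Real.exp_pos u, mul_le_mul_of_nonneg_left h1 hu]

lemma key_approx (m : ℕ) (a x : Fin m → ℝ) (ha : ∀ j, 0 ≤ a j) (hx : ∀ j, 0 ≤ x j)
    (hsum : ∑ j, a j = 1) :
    ∃ C : ℝ, 0 ≤ C ∧ ∀ l : ℕ, 0 < l →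
      |(∑ j, a j * Real.exp (x j / l)) ^ l - Real.exp (∑ j, a j * x j)| ≤ C / l := by
  set S := ∑ j, a j * x j with hS
  set B := ∑ j, a j * (x j ^ 2 * Real.exp (x j)) with hB
  have hS0 : 0 ≤ S := Finset.sum_nonneg fun j _ => mul_nonneg (ha j) (hx j)
  have hB0 : 0 ≤ B := Finset.sum_nonneg fun j _ =>
    mul_nonneg (ha j) (mul_nonneg (sq_nonneg _) (Real.exp_pos _).le)
  refine ⟨Real.exp S * Real.exp B * B, by positivity, fun l hl => ?_⟩
  have hL : (1 : ℝ) ≤ (l : ℝ) := by exact_mod_cast hl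
  have hLpos : (0 : ℝ) < l := by linarith
  -- lower bound via Jensen
  have jensen : Real.exp (S / l) ≤ ∑ j, a j * Real.exp (x j / l) := by
    have hmem : ∀ j ∈ Finset.univ, x j / (l:ℝ) ∈ (Set.univ : Set ℝ) :=
      fun _ _ => Set.mem_univ _
    have := convexOn_exp.map_sum_le (fun j _ => ha j) (by simpa using hsum) hmem
    simp only [smul_eq_mul] at this
    have heq : ∑ j, a j * (x j / (l:ℝ)) = S / l := by
      rw [hS, Finset.sum_div]
      exact Finset.sum_congr rfl fun j _ => by ring
    rw [heq] at this
    exact this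
  have hfnn : (0:ℝ) ≤ ∑ j, a j * Real.exp (x j / l) :=
    Finset.sum_nonneg fun j _ => mul_nonneg (ha j) (Real.exp_pos _).le
  have lower : Real.exp S ≤ (∑ j, a j * Real.exp (x j / l)) ^ l := by
    have h1 : Real.exp S = (Real.exp (S / l)) ^ l := by
      rw [← Real.exp_nat_mul]
      congr 1
      field_simp
    rw [h1]
    exact pow_le_pow_left₀ (Real.exp_pos _).le jensen l
  -- upper bound
  have upper : (∑ j, a j * Real.exp (x j / l)) ^ l ≤ Real.exp (S + B / l) := by
    have step : ∀ j, Real.exp (x j / l) ≤ 1 + x j / l + (x j ^ 2 * Real.exp (x j)) / l ^ 2 := by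
      intro j
      have hu : 0 ≤ x j / l := div_nonneg (hx j) hLpos.le
      have h1 := exp_le_taylor2 hu
      have h2 : x j / l ≤ x j := by
        rw [div_le_iff₀ hLpos]
        nlinarith [hx j]
      have h3 : Real.exp (x j / l) ≤ Real.exp (x j) := Real.exp_le_exp.2 h2
      have h4 : (x j / l) ^ 2 * Real.exp (x j / l) ≤ (x j ^ 2 * Real.exp (x j)) / l ^ 2 := by
        rw [div_pow]
        rw [div_mul_eq_mul_div, div_le_div_iff₀ (by positivity) (by positivity)]
        nlinarith [mul_le_mul_of_nonneg_left h3 (by positivity : (0:ℝ) ≤ x j ^ 2 * (l:ℝ) ^ 2)]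
      linarith
    have hsum2 : ∑ j, a j * Real.exp (x j / l) ≤ 1 + (S / l + B / l ^ 2) := by
      calc ∑ j, a j * Real.exp (x j / l)
          ≤ ∑ j, a j * (1 + x j / l + (x j ^ 2 * Real.exp (x j)) / l ^ 2) :=
            Finset.sum_le_sum fun j _ => mul_le_mul_of_nonneg_left (step j) (ha j)
        _ = (∑ j, a j) + (∑ j, a j * x j) / l + (∑ j, a j * (x j ^ 2 * Real.exp (x j))) / l ^ 2 := by
            rw [Finset.sum_div, Finset.sum_div, ← Finset.sum_add_distrib, ← Finset.sum_add_distrib]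
            exact Finset.sum_congr rfl fun j _ => by ring
        _ = 1 + (S / l + B / l ^ 2) := by rw [hsum]; ring
    have hsum3 : ∑ j, a j * Real.exp (x j / l) ≤ Real.exp (S / l + B / l ^ 2) := by
      calc ∑ j, a j * Real.exp (x j / l) ≤ 1 + (S / l + B / l ^ 2) := hsum2
        _ ≤ Real.exp (S / l + B / l ^ 2) := by
            have := Real.add_one_le_exp (S / l + B / l ^ 2); linarith
    calc (∑ j, a j * Real.exp (x j / l)) ^ l
        ≤ (Real.exp (S / l + B / l ^ 2)) ^ l := pow_le_pow_left₀ hfnn hsum3 l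
      _ = Real.exp ((l : ℝ) * (S / l + B / l ^ 2)) := (Real.exp_nat_mul _ l).symm
      _ = Real.exp (S + B / l) := by
          congr 1
          field_simp
  -- combine
  have habs : |(∑ j, a j * Real.exp (x j / l)) ^ l - Real.exp S|
      = (∑ j, a j * Real.exp (x j / l)) ^ l - Real.exp S :=
    abs_of_nonneg (by linarith)
  rw [habs]
  have h5 : Real.exp (S + B / l) - Real.exp S ≤ Real.exp S * Real.exp B * B / l := by
    rw [Real.exp_add]
    have hu : 0 ≤ B / l := div_nonneg hB0 hLpos.le
    have h6 := exp_sub_one_le_mul_exp hu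
    have h7 : Real.exp (B / l) ≤ Real.exp B := Real.exp_le_exp.2 (by
      rw [div_le_iff₀ hLpos]; nlinarith)
    have h8 : Real.exp (B / l) - 1 ≤ B / l * Real.exp B := by
      calc Real.exp (B / l) - 1 ≤ B / l * Real.exp (B / l) := h6
        _ ≤ B / l * Real.exp B := mul_le_mul_of_nonneg_left h7 hu
    calc Real.exp S * Real.exp (B / l) - Real.exp S
        = Real.exp S * (Real.exp (B / l) - 1) := by ring
      _ ≤ Real.exp S * (B / l * Real.exp B) :=
          mul_le_mul_of_nonneg_left h8 (Real.exp_pos _).le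
      _ = Real.exp S * Real.exp B * B / l := by ring
  linarith



/-- **Theorem 3 (O(1/l) approximation of the Gaussian moment generating function).**
Under the parameter setting `γ = 1 − (1−c_a)^m`, `α_k = c_a(1−c_a)^{m−k}/(1−(1−c_a)^m)`
(Eq. 7), for every `t ∈ ℝ^n` there is a constant `C ≥ 0` such that for every positive
integer `l`, `|M_l(t) − exp(½⟪t, C_a t⟫)| ≤ C/l`, where
`M_l(t) = exp(½(1−γ)‖t‖²) (∑_j α_j exp((γ/(2l))⟪t,q_j⟫²))^l` and
`⟪t, C_a t⟫ = (1−c_a)^m‖t‖² + c_a ∑_j (1−c_a)^{m−j}⟪t,q_j⟫²`.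
(Here `j, k : Fin m` are zero-based, so the paper's exponent `m − j` reads `m − 1 − j`.) -/
theorem fms_mgf_error_O_inv_l {n m : ℕ} (hn : 0 < n) (hm : 0 < m)
    (q : Fin m → EuclideanSpace ℝ (Fin n))
    (c : ℝ) (hc : c ∈ Set.Ioo (0 : ℝ) 1)
    (γ : ℝ) (hγ : γ = 1 - (1 - c) ^ m)
    (α : Fin m → ℝ)
    (hα : ∀ k : Fin m, α k = c * (1 - c) ^ (m - 1 - (k : ℕ)) / (1 - (1 - c) ^ m))
    (t : EuclideanSpace ℝ (Fin n)) :
    ∃ C : ℝ, 0 ≤ C ∧ ∀ l : ℕ, 0 < l →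
      |Real.exp ((1 - γ) / 2 * ‖t‖ ^ 2)
            * (∑ j : Fin m, α j * Real.exp (γ / (2 * l) * ⟪t, q j⟫ ^ 2)) ^ l
         - Real.exp (((1 - c) ^ m * ‖t‖ ^ 2
            + c * ∑ j : Fin m, (1 - c) ^ (m - 1 - (j : ℕ)) * ⟪t, q j⟫ ^ 2) / 2)|
        ≤ C / l := by
  obtain ⟨hc0, hc1⟩ := hc
  have hpow : (1 - c) ^ m < 1 := pow_lt_one₀ (by linarith) (by linarith) hm.ne'
  have hγpos : 0 < γ := by rw [hγ]; linarith
  have hD : (1 : ℝ) - (1 - c) ^ m ≠ 0 := by linarith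
  -- geometric sum
  have hgeom : c * ∑ j : Fin m, (1 - c) ^ (m - 1 - (j : ℕ)) = 1 - (1 - c) ^ m := by
    have h1 : ∑ j : Fin m, (1 - c) ^ (m - 1 - (j : ℕ))
        = ∑ j ∈ Finset.range m, (1 - c) ^ j := by
      rw [Fin.sum_univ_eq_sum_range (fun j => (1 - c) ^ (m - 1 - j)) m]
      exact Finset.sum_range_reflect (fun i => (1 - c) ^ i) m
    have h2 := geom_sum_mul (1 - c) m
    rw [h1]
    linear_combination (-1) * h2
  set x : Fin m → ℝ := fun j => γ * ⟪t, q j⟫ ^ 2 / 2 with hx_def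
  have ha : ∀ j, 0 ≤ α j := fun j => by
    rw [hα j]
    have h1 : (0:ℝ) ≤ (1 - c) ^ (m - 1 - (j:ℕ)) := pow_nonneg (by linarith) _
    exact div_nonneg (mul_nonneg hc0.le h1) (by linarith)
  have hx : ∀ j, 0 ≤ x j := fun j => by
    simp only [hx_def]; positivity
  have hsum : ∑ j, α j = 1 := by
    simp only [hα]
    rw [← Finset.sum_div]
    rw [div_eq_one_iff_eq hD, ← Finset.mul_sum]
    exact hgeom
  obtain ⟨C0, hC0, hbound⟩ := key_approx m α x ha hx hsum
  refine ⟨Real.exp ((1 - γ) / 2 * ‖t‖ ^ 2) * C0, by positivity, fun l hl => ?_⟩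
  have hLpos : (0 : ℝ) < l := by exact_mod_cast hl
  have hform : ∀ j : Fin m, γ / (2 * (l:ℝ)) * ⟪t, q j⟫ ^ 2 = x j / l := fun j => by
    simp only [hx_def]; ring
  have hterm : ∀ j : Fin m, α j * x j
      = c * ((1 - c) ^ (m - 1 - (j:ℕ)) * ⟪t, q j⟫ ^ 2) / 2 := fun j => by
    simp only [hx_def]
    rw [hα j, hγ]
    field_simp
  have hexp_eq : ((1 - c) ^ m * ‖t‖ ^ 2
        + c * ∑ j : Fin m, (1 - c) ^ (m - 1 - (j : ℕ)) * ⟪t, q j⟫ ^ 2) / 2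
      = (1 - γ) / 2 * ‖t‖ ^ 2 + ∑ j, α j * x j := by
    simp only [hterm]
    rw [← Finset.sum_div, ← Finset.mul_sum, hγ]
    ring
  simp only [hform]
  rw [hexp_eq, Real.exp_add, ← mul_sub, abs_mul, abs_of_nonneg (Real.exp_pos _).le]
  calc Real.exp ((1 - γ) / 2 * ‖t‖ ^ 2)
        * |(∑ j, α j * Real.exp (x j / l)) ^ l - Real.exp (∑ j, α j * x j)|
      ≤ Real.exp ((1 - γ) / 2 * ‖t‖ ^ 2) * (C0 / l) :=
        mul_le_mul_of_nonneg_left (hbound l hl) (Real.exp_pos _).le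
    _ = Real.exp ((1 - γ) / 2 * ‖t‖ ^ 2) * C0 / l := by ring
end

section
/- Let α_1,…,α_m ∈ (0,1) with Σ_{k=1}^m α_k = 1 and let a_1,…,a_m be real numbers with Σ_{k=1}^m α_k a_k = 0. Then there exists a constant C ≥ 0 such that for every positive integer l, |(Σ_{j=1}^m α_j · exp(a_j / l))^l − 1| ≤ C / l. -/
open Real Finset

/-- Uniform quadratic bound for `exp x - 1 - x` on `|x| ≤ A`. -/
lemma exp_sub_one_sub_quad {A x : ℝ} (hA : 1 ≤ A) (hx : |x| ≤ A) :
    |Real.exp x - 1 - x| ≤ 3 * Real.exp A * x ^ 2 := by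
  have hA0 : (0:ℝ) ≤ A := by linarith
  have heA : 1 ≤ Real.exp A := Real.one_le_exp hA0
  rcases le_or_gt |x| 1 with h1 | h1
  · have := Real.abs_exp_sub_one_sub_id_le h1
    nlinarith [sq_nonneg x]
  · have hx2 : 1 ≤ x ^ 2 := by
      nlinarith [abs_nonneg x, sq_abs x]
    have hex : Real.exp x ≤ Real.exp A :=
      Real.exp_le_exp.mpr (le_trans (le_abs_self x) hx)
    have hex0 : 0 < Real.exp x := Real.exp_pos x
    have hAe : A ≤ Real.exp A := le_trans (le_trans (le_add_of_nonneg_right zero_le_one)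
      (by linarith [Real.add_one_le_exp A])) le_rfl
    have habs : |Real.exp x - 1 - x| ≤ Real.exp x + 1 + |x| := by
      have := abs_sub (Real.exp x - 1) x
      have h2 : |Real.exp x - 1| ≤ Real.exp x + 1 := by
        rw [abs_le]; constructor <;> nlinarith
      calc |Real.exp x - 1 - x| ≤ |Real.exp x - 1| + |x| := abs_sub _ x
        _ ≤ Real.exp x + 1 + |x| := by linarith
    nlinarith [sq_nonneg x]

/-- Geometric-sum bound `|x^l - 1| ≤ |x - 1| * l * M^(l-1)` for `|x| ≤ M`, `1 ≤ M`. -/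
lemma abs_pow_sub_one_le {x M : ℝ} (hM : 1 ≤ M) (hx : |x| ≤ M) (l : ℕ) :
    |x ^ l - 1| ≤ |x - 1| * l * M ^ (l - 1) := by
  have hM0 : (0:ℝ) ≤ M := by linarith
  have key : x ^ l - 1 = (∑ i ∈ Finset.range l, x ^ i) * (x - 1) := (geom_sum_mul x l).symm
  rw [key, abs_mul]
  have hsum : |∑ i ∈ Finset.range l, x ^ i| ≤ l * M ^ (l - 1) := by
    calc |∑ i ∈ Finset.range l, x ^ i| ≤ ∑ i ∈ Finset.range l, |x ^ i| :=
          Finset.abs_sum_le_sum_abs _ _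
      _ ≤ ∑ i ∈ Finset.range l, M ^ (l - 1) := by
          apply Finset.sum_le_sum
          intro i hi
          rw [abs_pow]
          calc |x| ^ i ≤ M ^ i := pow_le_pow_left₀ (abs_nonneg x) hx i
            _ ≤ M ^ (l - 1) := pow_le_pow_right₀ hM
                (Nat.le_sub_one_of_lt (Finset.mem_range.mp hi))
      _ = l * M ^ (l - 1) := by rw [Finset.sum_const, Finset.card_range, nsmul_eq_mul]
  calc |∑ i ∈ Finset.range l, x ^ i| * |x - 1| ≤ (l * M ^ (l - 1)) * |x - 1| := by
        apply mul_le_mul_of_nonneg_right hsum (abs_nonneg _)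
    _ = |x - 1| * l * M ^ (l - 1) := by ring

/-- **Scalar O(1/l) estimate underlying Theorem 3.**
Let `α_1,…,α_m ∈ (0,1)` with `∑_k α_k = 1` and let `a_1,…,a_m` be reals with
`∑_k α_k a_k = 0`. Then there is a constant `C ≥ 0` such that for every positive integer
`l`, `|(∑_j α_j exp(a_j/l))^l − 1| ≤ C/l`. -/
theorem fms_scalar_error_O_inv_l {m : ℕ} (hm : 0 < m)
    (α a : Fin m → ℝ) (hα : ∀ k, α k ∈ Set.Ioo (0 : ℝ) 1) (hαsum : ∑ k, α k = 1)
    (ha : ∑ k, α k * a k = 0) :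
    ∃ C : ℝ, 0 ≤ C ∧ ∀ l : ℕ, 0 < l →
      |(∑ j : Fin m, α j * Real.exp (a j / l)) ^ l - 1| ≤ C / l := by
  set A : ℝ := 1 + ∑ j, |a j| with hAdef
  have hA1 : 1 ≤ A := by
    have : (0:ℝ) ≤ ∑ j, |a j| := Finset.sum_nonneg fun j _ => abs_nonneg _
    simp [hAdef]; linarith
  have hAj : ∀ j, |a j| ≤ A := by
    intro j
    have : |a j| ≤ ∑ j, |a j| :=
      Finset.single_le_sum (fun i _ => abs_nonneg (a i)) (Finset.mem_univ j)
    linarith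
  set K : ℝ := 3 * Real.exp A * A ^ 2 with hKdef
  have hK0 : 0 ≤ K := by positivity
  refine ⟨K * Real.exp K, by positivity, ?_⟩
  intro l hl
  have hL0 : (0:ℝ) < l := by exact_mod_cast hl
  have hL1 : (1:ℝ) ≤ l := by exact_mod_cast hl
  set S : ℝ := ∑ j : Fin m, α j * Real.exp (a j / l) with hSdef
  -- Step 1: |S - 1| ≤ K / l^2
  have hdiff : S - 1 = ∑ j, α j * (Real.exp (a j / l) - 1 - a j / l) := by
    have h0 : ∑ j, α j * (a j / (l:ℝ)) = 0 := by
      rw [show (fun j => α j * (a j / (l:ℝ))) = fun j => (α j * a j) / l by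
        funext j; ring]
      rw [← Finset.sum_div, ha, zero_div]
    simp only [mul_sub, Finset.sum_sub_distrib, mul_one, hαsum, h0, hSdef]
    ring
  have hS1 : |S - 1| ≤ K / (l:ℝ) ^ 2 := by
    rw [hdiff]
    calc |∑ j, α j * (Real.exp (a j / l) - 1 - a j / l)|
        ≤ ∑ j, |α j * (Real.exp (a j / l) - 1 - a j / l)| :=
          Finset.abs_sum_le_sum_abs _ _
      _ ≤ ∑ j, α j * (K / (l:ℝ) ^ 2) := by
          apply Finset.sum_le_sum
          intro j _
          rw [abs_mul, abs_of_pos (hα j).1]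
          apply mul_le_mul_of_nonneg_left _ (le_of_lt (hα j).1)
          have hxA : |a j / (l:ℝ)| ≤ A := by
            rw [abs_div, abs_of_pos hL0]
            calc |a j| / (l:ℝ) ≤ |a j| / 1 := by
                  apply div_le_div_of_nonneg_left (abs_nonneg _) one_pos hL1
              _ = |a j| := div_one _
              _ ≤ A := hAj j
          calc |Real.exp (a j / l) - 1 - a j / l|
              ≤ 3 * Real.exp A * (a j / l) ^ 2 := exp_sub_one_sub_quad hA1 hxA
            _ ≤ K / (l:ℝ) ^ 2 := by
                have hsq : (a j) ^ 2 ≤ A ^ 2 := by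
                  have := hAj j
                  nlinarith [abs_nonneg (a j), sq_abs (a j)]
                rw [hKdef, div_pow, mul_div_assoc]
                gcongr
      _ = K / (l:ℝ) ^ 2 := by rw [← Finset.sum_mul, hαsum, one_mul]
  -- Step 2: S > 0 and S ≤ M := 1 + K/l^2
  have hSpos : 0 < S := by
    rw [hSdef]
    apply Finset.sum_pos (fun j _ => mul_pos (hα j).1 (Real.exp_pos _))
    exact Finset.univ_nonempty_iff.mpr (Fin.pos_iff_nonempty.mp hm)
  set M : ℝ := 1 + K / (l:ℝ) ^ 2 with hMdef
  have hM1 : 1 ≤ M := by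
    rw [hMdef]
    have : 0 ≤ K / (l:ℝ) ^ 2 := by positivity
    linarith
  have hSM : |S| ≤ M := by
    rw [abs_of_pos hSpos, hMdef]
    have := (abs_le.mp hS1).2
    linarith
  -- Step 3: M^(l-1) ≤ exp K
  have hMexp : M ^ (l - 1) ≤ Real.exp K := by
    have h1 : M ^ (l - 1) ≤ M ^ l :=
      pow_le_pow_right₀ hM1 (Nat.sub_le l 1)
    have h2 : M ^ l ≤ Real.exp (K / (l:ℝ) ^ 2) ^ l := by
      apply pow_le_pow_left₀ (by linarith)
      linarith [Real.add_one_le_exp (K / (l:ℝ) ^ 2)]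
    have h3 : Real.exp (K / (l:ℝ) ^ 2) ^ l = Real.exp ((l:ℝ) * (K / (l:ℝ) ^ 2)) := by
      rw [← Real.exp_nat_mul]
    have h4 : (l:ℝ) * (K / (l:ℝ) ^ 2) = K / l := by
      field_simp
    have h5 : Real.exp (K / (l:ℝ)) ≤ Real.exp K := by
      apply Real.exp_le_exp.mpr
      rw [div_le_iff₀ hL0]
      nlinarith
    calc M ^ (l - 1) ≤ M ^ l := h1
      _ ≤ Real.exp (K / (l:ℝ) ^ 2) ^ l := h2
      _ = Real.exp (K / l) := by rw [h3, h4]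
      _ ≤ Real.exp K := h5
  -- Step 4: combine
  have hmain := abs_pow_sub_one_le hM1 hSM l
  calc |S ^ l - 1| ≤ |S - 1| * l * M ^ (l - 1) := hmain
    _ ≤ (K / (l:ℝ) ^ 2) * l * Real.exp K := by
        apply mul_le_mul
        · apply mul_le_mul_of_nonneg_right hS1 (le_of_lt hL0)
        · exact hMexp
        · positivity
        · positivity
    _ = K * Real.exp K / l := by field_simp
end

section
/- For every unit vector v ∈ ℝ^n and every s ∈ ℝ, E[exp(s·⟨v, z⟩)] = (Σ_{j=1}^m α_j · exp((s²/(2l))·d_j))^l, where d_j := (1−γ) + γ·⟨v, q_j⟩². -/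
open MeasureTheory ProbabilityTheory
open scoped RealInnerProductSpace

noncomputable section

/-! ### Auxiliary lemmas -/

section Aux

open Real
open scoped NNReal ENNReal

lemma FMS.gauss_pointwise (c x : ℝ) :
    gaussianPDFReal 0 1 x * Real.exp (c * x) = Real.exp (c ^ 2 / 2) * gaussianPDFReal c 1 x := by
  simp only [gaussianPDFReal, NNReal.coe_one, mul_one, sub_zero, one_div]
  rw [mul_assoc, ← Real.exp_add, ← mul_assoc, mul_comm (Real.exp _), mul_assoc, ← Real.exp_add]
  congr 2
  ring

lemma FMS.gaussianReal_as_nnreal :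
    gaussianReal 0 1 = MeasureTheory.Measure.withDensity volume
      (fun x => ((Real.toNNReal (gaussianPDFReal 0 1 x) : ℝ≥0) : ℝ≥0∞)) := by
  rw [gaussianReal_of_var_ne_zero _ one_ne_zero]
  rfl

lemma FMS.integrable_exp_mul_gaussianReal (c : ℝ) :
    Integrable (fun x => Real.exp (c * x)) (gaussianReal 0 1) := by
  rw [FMS.gaussianReal_as_nnreal,
    integrable_withDensity_iff_integrable_smul
      ((measurable_gaussianPDFReal 0 1).real_toNNReal)]
  have : (fun x => (Real.toNNReal (gaussianPDFReal 0 1 x) : ℝ≥0) • Real.exp (c * x))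
      = fun x => Real.exp (c ^ 2 / 2) * gaussianPDFReal c 1 x := by
    funext x
    rw [NNReal.smul_def, smul_eq_mul, Real.coe_toNNReal _ (gaussianPDFReal_nonneg _ _ _),
      FMS.gauss_pointwise]
  rw [this]
  exact (integrable_gaussianPDFReal c 1).const_mul _

lemma FMS.integral_exp_mul_gaussianReal (c : ℝ) :
    ∫ x, Real.exp (c * x) ∂(gaussianReal 0 1) = Real.exp (c ^ 2 / 2) := by
  rw [FMS.gaussianReal_as_nnreal,
    integral_withDensity_eq_integral_smul ((measurable_gaussianPDFReal 0 1).real_toNNReal)]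
  have : (fun x => (Real.toNNReal (gaussianPDFReal 0 1 x) : ℝ≥0) • Real.exp (c * x))
      = fun x => Real.exp (c ^ 2 / 2) * gaussianPDFReal c 1 x := by
    funext x
    rw [NNReal.smul_def, smul_eq_mul, Real.coe_toNNReal _ (gaussianPDFReal_nonneg _ _ _),
      FMS.gauss_pointwise]
  rw [this, integral_const_mul, integral_gaussianPDFReal_eq_one c one_ne_zero, mul_one]

lemma FMS.nullMeasurableSet_of_add_compl_le {Ω : Type*} [MeasurableSpace Ω] {μ : Measure Ω}
    [IsFiniteMeasure μ] {s : Set Ω} (h : μ s + μ sᶜ ≤ μ Set.univ) : NullMeasurableSet s μ := by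
  set t := toMeasurable μ s with ht
  set u := toMeasurable μ sᶜ with hu
  have hst : s ⊆ t := subset_toMeasurable _ _
  have hus : uᶜ ⊆ s := by
    rw [Set.compl_subset_comm]
    exact (subset_toMeasurable _ _)
  have hut : uᶜ ⊆ t := hus.trans hst
  have hu_meas : MeasurableSet uᶜ := (measurableSet_toMeasurable _ _).compl
  have hucm : μ uᶜ = μ Set.univ - μ sᶜ := by
    rw [measure_compl (measurableSet_toMeasurable _ _) (measure_ne_top _ _),
      measure_toMeasurable]
  have h1 : μ t ≤ μ uᶜ := by
    rw [measure_toMeasurable, hucm]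
    exact ENNReal.le_sub_of_add_le_right (measure_ne_top _ _) h
  have h2 : μ (t \ uᶜ) = 0 := by
    rw [measure_diff hut hu_meas.nullMeasurableSet (measure_ne_top _ _)]
    exact tsub_eq_zero_of_le h1
  have hae : s =ᵐ[μ] uᶜ := by
    refine MeasureTheory.ae_eq_set.mpr ?_
    constructor
    · exact measure_mono_null (Set.diff_subset_diff_left hst) h2
    · have : uᶜ \ s = ∅ := Set.diff_eq_empty.mpr hus
      refine (congrArg μ this).trans ?_
      exact measure_empty
  exact hu_meas.nullMeasurableSet.congr hae.symm

lemma FMS.iIndepFun_congr_ae {ι : Type*} {Ω : Type*} [MeasurableSpace Ω] {μ : Measure Ω}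
    {β : ι → Type*} {m : ∀ i, MeasurableSpace (β i)} {f g : ∀ i, Ω → β i}
    (hf : iIndepFun (m := m) f μ) (h : ∀ i, f i =ᵐ[μ] g i) : iIndepFun (m := m) g μ := by
  rw [iIndepFun_iff_measure_inter_preimage_eq_mul] at hf ⊢
  intro S sets hsets
  have hpre : ∀ i, f i ⁻¹' sets i =ᵐ[μ] g i ⁻¹' sets i := fun i => by
    filter_upwards [h i] with ω hω
    show (f i ω ∈ sets i) = (g i ω ∈ sets i)
    rw [hω]
  have h1 : (⋂ i ∈ S, f i ⁻¹' sets i) =ᵐ[μ] (⋂ i ∈ S, g i ⁻¹' sets i) :=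
    EventuallyEq.countable_bInter S.countable_toSet fun i (_ : i ∈ (S : Set ι)) => hpre i
  rw [← measure_congr h1, hf S hsets]
  exact Finset.prod_congr rfl fun i _ => measure_congr (hpre i)

lemma FMS.integral_prod_of_iIndepFun {ι : Type*} [DecidableEq ι] {Ω : Type*} [MeasurableSpace Ω]
    {μ : Measure Ω} [IsProbabilityMeasure μ]
    {β : ι → Type*} {m : ∀ i, MeasurableSpace (β i)} {f : ∀ i, Ω → β i}
    (hindep : iIndepFun (m := m) f μ) (hmeas : ∀ i, Measurable (f i))
    (φ : ∀ i, β i → ℝ) (hφ : ∀ i, Measurable (φ i))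
    (hint : ∀ i, Integrable (fun ω => φ i (f i ω)) μ) (S : Finset ι) :
    Integrable (fun ω => ∏ i ∈ S, φ i (f i ω)) μ ∧
    ∫ ω, ∏ i ∈ S, φ i (f i ω) ∂μ = ∏ i ∈ S, ∫ ω, φ i (f i ω) ∂μ := by
  classical
  induction S using Finset.induction_on with
  | empty => simp
  | insert a S hi ih =>
    have hIndep : IndepFun (fun ω => φ a (f a ω)) (fun ω => ∏ i ∈ S, φ i (f i ω)) μ := by
      have h2 := hindep.indepFun_finset {a} S (by simpa using hi) hmeas
      have ha : (fun ω => φ a (f a ω))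
          = (fun (v : ∀ x : ({a} : Finset ι), β x) => φ a (v ⟨a, Finset.mem_singleton_self a⟩))
            ∘ (fun ω (x : ({a} : Finset ι)) => f x ω) := rfl
      have hb : (fun ω => ∏ i ∈ S, φ i (f i ω))
          = (fun (v : ∀ x : (S : Finset ι), β x) => ∏ i ∈ S.attach, φ i (v i))
            ∘ (fun ω (x : (S : Finset ι)) => f x ω) := by
        funext ω
        simp only [Function.comp_apply]
        rw [← Finset.prod_attach S (fun i => φ i (f i ω))]
      rw [ha, hb]
      exact h2.comp ((hφ a).comp (measurable_pi_apply _))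
        (Finset.measurable_prod _ fun i _ => (hφ i).comp (measurable_pi_apply _))
    have heq : (fun ω => ∏ i ∈ insert a S, φ i (f i ω))
        = fun ω => φ a (f a ω) * ∏ i ∈ S, φ i (f i ω) :=
      funext fun ω => Finset.prod_insert hi
    constructor
    · rw [heq]
      exact hIndep.integrable_mul (hint a) ih.1
    · rw [heq]
      have h3 := hIndep.integral_mul_eq_mul_integral (hint a).1 ih.1.1
      rw [show ((fun ω => φ a (f a ω)) * fun ω => ∏ i ∈ S, φ i (f i ω))
          = fun ω => φ a (f a ω) * ∏ i ∈ S, φ i (f i ω) from rfl] at h3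
      rw [h3, ih.2, Finset.prod_insert hi]

lemma FMS.key_sum {l m : ℕ} (A : ℝ) (B : Fin m → Fin l → ℝ) (κ : Fin l → Fin m) :
    ∑ c : Fin l → Fin m, A * ((∏ j, B (c j) j) * ∏ j, (if κ j = c j then (1:ℝ) else 0))
      = A * ∏ j, B (κ j) j := by
  classical
  rw [Finset.sum_eq_single κ]
  · simp
  · intro c _ hc
    have : ∃ j, κ j ≠ c j := by
      by_contra hall
      push_neg at hall
      exact hc (funext fun j => (hall j).symm)
    obtain ⟨j, hj⟩ := this
    have : (∏ j, if κ j = c j then (1:ℝ) else 0) = 0 :=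
      Finset.prod_eq_zero (Finset.mem_univ j) (if_neg hj)
    rw [this]
    ring
  · intro h
    exact absurd (Finset.mem_univ κ) h

/-- The single-coordinate test functions used in the factorisation of the FMS mgf. -/
def FMSphi {n m l : ℕ} (q : Fin m → EuclideanSpace ℝ (Fin n)) (v : EuclideanSpace ℝ (Fin n))
    (c0 c1 : ℝ) (c : Fin l → Fin m) : ∀ k : FMSIndex n l, FMSCodomain n m l k → ℝ
  | Sum.inl i => fun x : ℝ => Real.exp (c0 * v i * x)
  | Sum.inr (Sum.inl j) => fun x : ℝ => Real.exp (c1 * ⟪v, q (c j)⟫ * x)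
  | Sum.inr (Sum.inr j) => fun y : Fin m => if y = c j then 1 else 0

/-- Measurable-modification family. -/
def FMSFam' {n m l : ℕ} {Ω : Type*} (Z : Fin n → Ω → ℝ) (ZS : Fin l → Ω → ℝ)
    (IDX : Fin l → Ω → Fin m) : ∀ k : FMSIndex n l, Ω → FMSCodomain n m l k
  | Sum.inl i => Z i
  | Sum.inr (Sum.inl j) => ZS j
  | Sum.inr (Sum.inr j) => IDX j

end Aux

/-- **Projected moment generating function of the FMS mixture.**
For every unit vector `v ∈ ℝ^n` and every `s ∈ ℝ`,
`E[exp(s⟪v,z⟫)] = (∑_j α_j exp((s²/(2l)) d_j))^l` where `d_j = (1−γ) + γ⟪v,q_j⟫²`. -/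
theorem fms_projected_mgf
    {n m l : ℕ} (hn : 0 < n) (hm : 0 < m) (hl : 0 < l)
    (q : Fin m → EuclideanSpace ℝ (Fin n))
    (α : Fin m → ℝ) (hα : ∀ k, α k ∈ Set.Ioo (0 : ℝ) 1) (hαsum : ∑ k, α k = 1)
    (γ : ℝ) (hγ : γ ∈ Set.Ioo (0 : ℝ) 1)
    {Ω : Type*} [MeasurableSpace Ω] (P : Measure Ω) [IsProbabilityMeasure P]
    (z₀ : Ω → EuclideanSpace ℝ (Fin n)) (zs : Fin l → Ω → ℝ) (idx : Fin l → Ω → Fin m)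
    (hz₀ : ∀ i : Fin n, Measure.map (fun ω => z₀ ω i) P = gaussianReal 0 1)
    (hzs : ∀ j : Fin l, Measure.map (zs j) P = gaussianReal 0 1)
    (hidx : ∀ (j : Fin l) (k : Fin m), P {ω | idx j ω = k} = ENNReal.ofReal (α k))
    (hindep : iIndepFun (FMSFamily z₀ zs idx) P)
    (z : Ω → EuclideanSpace ℝ (Fin n))
    (hz : ∀ ω, z ω = Real.sqrt (1 - γ) • z₀ ω
        + Real.sqrt (γ / l) • ∑ j : Fin l, zs j ω • q (idx j ω))
    (v : EuclideanSpace ℝ (Fin n)) (hv : ‖v‖ = 1) (s : ℝ) :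
    ∫ ω, Real.exp (s * ⟪v, z ω⟫) ∂P
      = (∑ j : Fin m,
          α j * Real.exp (s ^ 2 / (2 * l) * ((1 - γ) + γ * ⟪v, q j⟫ ^ 2))) ^ l := by
  classical
  have hl' : (l : ℝ) ≠ 0 := Nat.cast_ne_zero.mpr hl.ne'
  have hγ0 : (0:ℝ) ≤ 1 - γ := by linarith [hγ.2]
  have hγl : (0:ℝ) ≤ γ / l := div_nonneg hγ.1.le (Nat.cast_nonneg l)
  set c0 : ℝ := s * Real.sqrt (1 - γ) with hc0
  set c1 : ℝ := s * Real.sqrt (γ / l) with hc1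
  have hv2 : ∑ i, v i ^ 2 = 1 := by
    have h := real_inner_self_eq_norm_sq v
    rw [hv, one_pow] at h
    simp only [PiLp.inner_apply, RCLike.inner_apply, conj_trivial] at h
    rw [← h]
    exact Finset.sum_congr rfl fun i _ => sq (v i)
  -- a.e. measurability of the ingredients
  have hmap_aem : ∀ {f : Ω → ℝ}, Measure.map f P = gaussianReal 0 1 → AEMeasurable f P := by
    intro f hf
    by_contra hcon
    rw [Measure.map_of_not_aemeasurable hcon] at hf
    have h1 : (gaussianReal 0 1) Set.univ = 1 := measure_univ
    rw [← hf] at h1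
    simp at h1
  have haem_z0 : ∀ i, AEMeasurable (fun ω => z₀ ω i) P := fun i => hmap_aem (hz₀ i)
  have haem_zs : ∀ j, AEMeasurable (zs j) P := fun j => hmap_aem (hzs j)
  have hidx' : ∀ (j : Fin l) (k : Fin m), P (idx j ⁻¹' {k}) = ENNReal.ofReal (α k) := by
    intro j k
    have : idx j ⁻¹' {k} = {ω | idx j ω = k} := by ext ω; simp
    rw [this, hidx j k]
  have haem_idx : ∀ j, AEMeasurable (idx j) P := by
    intro j
    have hnull : ∀ k : Fin m, NullMeasurableSet (idx j ⁻¹' {k}) P := by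
      intro k
      apply FMS.nullMeasurableSet_of_add_compl_le
      have hsub : (idx j ⁻¹' {k})ᶜ ⊆ ⋃ k' ∈ Finset.univ.erase k, idx j ⁻¹' {k'} := by
        intro ω hω
        simp only [Set.mem_compl_iff, Set.mem_preimage, Set.mem_singleton_iff] at hω
        refine Set.mem_biUnion (Finset.mem_erase.mpr ⟨hω, Finset.mem_univ _⟩) rfl
      have hle : P (idx j ⁻¹' {k})ᶜ ≤ ∑ k' ∈ Finset.univ.erase k, ENNReal.ofReal (α k') := by
        refine (measure_mono hsub).trans ?_
        refine (measure_biUnion_finset_le _ _).trans ?_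
        exact le_of_eq (Finset.sum_congr rfl fun k' _ => hidx' j k')
      calc P (idx j ⁻¹' {k}) + P (idx j ⁻¹' {k})ᶜ
          ≤ ENNReal.ofReal (α k) + ∑ k' ∈ Finset.univ.erase k, ENNReal.ofReal (α k') := by
            rw [hidx' j k]; exact add_le_add le_rfl hle
        _ = ∑ k' : Fin m, ENNReal.ofReal (α k') :=
            Finset.add_sum_erase Finset.univ (fun k' => ENNReal.ofReal (α k'))
              (Finset.mem_univ k)
        _ = ENNReal.ofReal (∑ k', α k') :=
            (ENNReal.ofReal_sum_of_nonneg fun k' _ => (hα k').1.le).symm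
        _ = 1 := by rw [hαsum, ENNReal.ofReal_one]
        _ = P Set.univ := measure_univ.symm
    have hNM : NullMeasurable (idx j) P := by
      intro t ht
      have : idx j ⁻¹' t = ⋃ k ∈ t, idx j ⁻¹' {k} := by ext ω; simp
      rw [this]
      exact (Set.toFinite t).nullMeasurableSet_biUnion fun k _ => hnull k
    exact hNM.aemeasurable
  -- measurable modifications
  set Z : Fin n → Ω → ℝ := fun i => (haem_z0 i).mk _ with hZdef
  have hZmeas : ∀ i, Measurable (Z i) := fun i => (haem_z0 i).measurable_mk
  have hZae : ∀ i, (fun ω => z₀ ω i) =ᵐ[P] Z i := fun i => (haem_z0 i).ae_eq_mk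
  set ZS : Fin l → Ω → ℝ := fun j => (haem_zs j).mk _ with hZSdef
  have hZSmeas : ∀ j, Measurable (ZS j) := fun j => (haem_zs j).measurable_mk
  have hZSae : ∀ j, zs j =ᵐ[P] ZS j := fun j => (haem_zs j).ae_eq_mk
  set IDX : Fin l → Ω → Fin m := fun j => (haem_idx j).mk _ with hIDXdef
  have hIDXmeas : ∀ j, Measurable (IDX j) := fun j => (haem_idx j).measurable_mk
  have hIDXae : ∀ j, idx j =ᵐ[P] IDX j := fun j => (haem_idx j).ae_eq_mk
  set G : ∀ k : FMSIndex n l, Ω → FMSCodomain n m l k := FMSFam' Z ZS IDX with hGdef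
  have hGmeas : ∀ k, Measurable (G k) := by
    intro k
    rcases k with i | j | j
    · exact hZmeas i
    · exact hZSmeas j
    · exact hIDXmeas j
  have hGindep : iIndepFun G P := by
    refine FMS.iIndepFun_congr_ae hindep ?_
    intro k
    rcases k with i | j | j
    · exact hZae i
    · exact hZSae j
    · exact hIDXae j
  have hZmap : ∀ i, Measure.map (Z i) P = gaussianReal 0 1 := fun i => by
    rw [← Measure.map_congr (hZae i), hz₀ i]
  have hZSmap : ∀ j, Measure.map (ZS j) P = gaussianReal 0 1 := fun j => by
    rw [← Measure.map_congr (hZSae j), hzs j]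
  -- integrability and integrals of exponentials of Gaussians
  have hint_exp : ∀ (a : ℝ) (f : Ω → ℝ), Measurable f → Measure.map f P = gaussianReal 0 1 →
      Integrable (fun ω => Real.exp (a * f ω)) P ∧
        ∫ ω, Real.exp (a * f ω) ∂P = Real.exp (a ^ 2 / 2) := by
    intro a f hfm hfmap
    have hsm : AEStronglyMeasurable (fun x => Real.exp (a * x)) (Measure.map f P) :=
      ((measurable_id.const_mul a).exp).aestronglyMeasurable
    have h1 : Integrable (fun x => Real.exp (a * x)) (Measure.map f P) := by
      rw [hfmap]; exact FMS.integrable_exp_mul_gaussianReal a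
    constructor
    · exact (integrable_map_measure hsm hfm.aemeasurable).mp h1
    · rw [← integral_map hfm.aemeasurable hsm, hfmap, FMS.integral_exp_mul_gaussianReal]
  have hIDXmeasure : ∀ (j : Fin l) (k : Fin m), P (IDX j ⁻¹' {k}) = ENNReal.ofReal (α k) := by
    intro j k
    rw [← hidx' j k]
    refine measure_congr ?_
    filter_upwards [hIDXae j] with ω hω
    show (IDX j ω ∈ ({k} : Set (Fin m))) = (idx j ω ∈ ({k} : Set (Fin m)))
    rw [hω]
  -- measurability, integrability and integrals of the coordinate test functions
  have hφmeas : ∀ (c : Fin l → Fin m) (k : FMSIndex n l), Measurable (FMSphi q v c0 c1 c k) := by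
    intro c k
    rcases k with i | j | j
    · exact (measurable_id.const_mul _).exp
    · exact (measurable_id.const_mul _).exp
    · exact (Measurable.of_discrete : Measurable (fun y : Fin m => if y = c j then (1:ℝ) else 0))
  have hφint : ∀ (c : Fin l → Fin m) (k : FMSIndex n l),
      Integrable (fun ω => FMSphi q v c0 c1 c k (G k ω)) P := by
    intro c k
    rcases k with i | j | j
    · exact (hint_exp (c0 * v i) (Z i) (hZmeas i) (hZmap i)).1
    · exact (hint_exp (c1 * ⟪v, q (c j)⟫) (ZS j) (hZSmeas j) (hZSmap j)).1
    · show Integrable (fun ω => if IDX j ω = c j then (1:ℝ) else 0) P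
      have : (fun ω => if IDX j ω = c j then (1:ℝ) else 0)
          = (IDX j ⁻¹' {c j}).indicator (fun _ => (1:ℝ)) := by
        funext ω
        simp [Set.indicator_apply]
      rw [this]
      exact (integrable_const (1:ℝ)).indicator ((hIDXmeas j) (measurableSet_singleton _))
  have hφval : ∀ (c : Fin l → Fin m),
      (∀ i : Fin n, ∫ ω, FMSphi q v c0 c1 c (Sum.inl i) (G (Sum.inl i) ω) ∂P
          = Real.exp ((c0 * v i) ^ 2 / 2)) ∧
      (∀ j : Fin l, ∫ ω, FMSphi q v c0 c1 c (Sum.inr (Sum.inl j)) (G (Sum.inr (Sum.inl j)) ω) ∂P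
          = Real.exp ((c1 * ⟪v, q (c j)⟫) ^ 2 / 2)) ∧
      (∀ j : Fin l, ∫ ω, FMSphi q v c0 c1 c (Sum.inr (Sum.inr j)) (G (Sum.inr (Sum.inr j)) ω) ∂P
          = α (c j)) := by
    intro c
    refine ⟨fun i => (hint_exp (c0 * v i) (Z i) (hZmeas i) (hZmap i)).2,
      fun j => (hint_exp (c1 * ⟪v, q (c j)⟫) (ZS j) (hZSmeas j) (hZSmap j)).2, fun j => ?_⟩
    show ∫ ω, (if IDX j ω = c j then (1:ℝ) else 0) ∂P = α (c j)
    have h1 : (fun ω => if IDX j ω = c j then (1:ℝ) else 0)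
        = (IDX j ⁻¹' {c j}).indicator (fun _ => (1:ℝ)) := by
      funext ω
      simp [Set.indicator_apply]
    rw [h1, integral_indicator_const (1:ℝ) ((hIDXmeas j) (measurableSet_singleton _)),
      measureReal_def, hIDXmeasure j (c j), smul_eq_mul, mul_one, ENNReal.toReal_ofReal (hα (c j)).1.le]
  -- pointwise a.e. expansion of the integrand
  have hae_int : (fun ω => Real.exp (s * ⟪v, z ω⟫)) =ᵐ[P]
      (fun ω => ∑ c : Fin l → Fin m, ∏ k : FMSIndex n l, FMSphi q v c0 c1 c k (G k ω)) := by
    have h1 : ∀ᵐ ω ∂P, ∀ i, z₀ ω i = Z i ω := ae_all_iff.mpr fun i => hZae i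
    have h2 : ∀ᵐ ω ∂P, ∀ j, zs j ω = ZS j ω := ae_all_iff.mpr fun j => hZSae j
    have h3 : ∀ᵐ ω ∂P, ∀ j, idx j ω = IDX j ω := ae_all_iff.mpr fun j => hIDXae j
    filter_upwards [h1, h2, h3] with ω hω1 hω2 hω3
    have hterm : ∀ c : Fin l → Fin m, ∏ k : FMSIndex n l, FMSphi q v c0 c1 c k (G k ω)
        = (∏ i, Real.exp (c0 * v i * Z i ω)) *
          ((∏ j, Real.exp (c1 * ⟪v, q (c j)⟫ * ZS j ω)) *
            ∏ j, (if IDX j ω = c j then (1:ℝ) else 0)) := by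
      intro c
      rw [Fintype.prod_sum_type]
      congr 1
      rw [Fintype.prod_sum_type]
      rfl
    have hsum : ∑ c : Fin l → Fin m, ∏ k : FMSIndex n l, FMSphi q v c0 c1 c k (G k ω)
        = (∏ i, Real.exp (c0 * v i * Z i ω)) *
          ∏ j, Real.exp (c1 * ⟪v, q (IDX j ω)⟫ * ZS j ω) := by
      simp only [hterm]
      exact FMS.key_sum _ (fun k j => Real.exp (c1 * ⟪v, q k⟫ * ZS j ω)) (fun j => IDX j ω)
    rw [hsum, ← Real.exp_sum, ← Real.exp_sum, ← Real.exp_add]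
    congr 1
    have e0 : ⟪v, z ω⟫ = Real.sqrt (1 - γ) * ⟪v, z₀ ω⟫
        + Real.sqrt (γ / l) * ∑ j, zs j ω * ⟪v, q (idx j ω)⟫ := by
      rw [hz ω, inner_add_right, real_inner_smul_right, real_inner_smul_right, inner_sum]
      simp only [real_inner_smul_right]
    have e1 : ⟪v, z₀ ω⟫ = ∑ i, v i * Z i ω := by
      simp only [PiLp.inner_apply, RCLike.inner_apply, conj_trivial]
      exact Finset.sum_congr rfl fun i _ => by rw [hω1 i, mul_comm]
    have e2 : (∑ j, zs j ω * ⟪v, q (idx j ω)⟫) = ∑ j, ZS j ω * ⟪v, q (IDX j ω)⟫ :=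
      Finset.sum_congr rfl fun j _ => by rw [hω2 j, hω3 j]
    calc s * ⟪v, z ω⟫
        = s * (Real.sqrt (1 - γ) * (∑ i, v i * Z i ω)
            + Real.sqrt (γ / l) * ∑ j, ZS j ω * ⟪v, q (IDX j ω)⟫) := by
          rw [e0, e1, e2]
      _ = (∑ i, c0 * v i * Z i ω) + ∑ j, c1 * ⟪v, q (IDX j ω)⟫ * ZS j ω := by
          have r1 : (∑ i, c0 * v i * Z i ω) = c0 * ∑ i, v i * Z i ω := by
            rw [Finset.mul_sum]
            exact Finset.sum_congr rfl fun i _ => by ring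
          have r2 : (∑ j, c1 * ⟪v, q (IDX j ω)⟫ * ZS j ω)
              = c1 * ∑ j, ZS j ω * ⟪v, q (IDX j ω)⟫ := by
            rw [Finset.mul_sum]
            exact Finset.sum_congr rfl fun j _ => by ring
          rw [r1, r2, hc0, hc1]
          ring
  -- the main computation
  rw [integral_congr_ae hae_int,
    integral_finset_sum Finset.univ (fun c _ =>
      (FMS.integral_prod_of_iIndepFun hGindep hGmeas _ (hφmeas c) (hφint c) Finset.univ).1)]
  have hIeq : ∀ c : Fin l → Fin m, ∫ ω, ∏ k : FMSIndex n l, FMSphi q v c0 c1 c k (G k ω) ∂P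
      = (∏ i, Real.exp ((c0 * v i) ^ 2 / 2)) *
        ∏ j, (Real.exp ((c1 * ⟪v, q (c j)⟫) ^ 2 / 2) * α (c j)) := by
    intro c
    rw [(FMS.integral_prod_of_iIndepFun hGindep hGmeas _ (hφmeas c) (hφint c) Finset.univ).2,
      Fintype.prod_sum_type, Fintype.prod_sum_type, ← Finset.prod_mul_distrib]
    congr 1
    · exact Finset.prod_congr rfl fun i _ => (hφval c).1 i
    · exact Finset.prod_congr rfl fun j _ => by rw [(hφval c).2.1 j, (hφval c).2.2 j]
  rw [Finset.sum_congr rfl fun c _ => hIeq c, ← Finset.mul_sum]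
  have hswap : ∑ c : Fin l → Fin m, ∏ j, (Real.exp ((c1 * ⟪v, q (c j)⟫) ^ 2 / 2) * α (c j))
      = (∑ k : Fin m, Real.exp ((c1 * ⟪v, q k⟫) ^ 2 / 2) * α k) ^ l := by
    have hps := Finset.prod_univ_sum (κ := fun _ : Fin l => Fin m)
      (fun _ => (Finset.univ : Finset (Fin m)))
      (fun j k => Real.exp ((c1 * ⟪v, q k⟫) ^ 2 / 2) * α k)
    rw [Fintype.piFinset_univ] at hps
    rw [← hps, Finset.prod_const, Finset.card_univ, Fintype.card_fin]
  rw [hswap]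
  have hA : (∏ i, Real.exp ((c0 * v i) ^ 2 / 2)) = Real.exp (s ^ 2 * (1 - γ) / 2) := by
    rw [← Real.exp_sum]
    congr 1
    have h6 : ∀ i : Fin n, (c0 * v i) ^ 2 / 2 = s ^ 2 * (1 - γ) / 2 * v i ^ 2 := fun i => by
      rw [hc0, mul_pow, mul_pow, Real.sq_sqrt hγ0]
      ring
    rw [Finset.sum_congr rfl fun i _ => h6 i, ← Finset.mul_sum, hv2, mul_one]
  rw [hA]
  have h5 : Real.exp (s ^ 2 * (1 - γ) / 2) = Real.exp (s ^ 2 / (2 * l) * (1 - γ)) ^ l := by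
    rw [← Real.exp_nat_mul]
    congr 1
    field_simp
  rw [h5, ← mul_pow]
  congr 1
  rw [Finset.mul_sum]
  refine Finset.sum_congr rfl fun k _ => ?_
  rw [← mul_assoc, ← Real.exp_add, mul_comm]
  congr 1
  have h7 : (c1 * ⟪v, q k⟫) ^ 2 = s ^ 2 * (γ / l) * ⟪v, q k⟫ ^ 2 := by
    rw [hc1, mul_pow, mul_pow, Real.sq_sqrt hγl]
  rw [h7]
  field_simp

end
end

section
/- For every unit vector v ∈ ℝ^n, E[⟨v, z⟩²] = Σ_{j=1}^m α_j d_j, where d_j := (1−γ) + γ·⟨v, q_j⟩²; that is, the variance of the projection of the FMS mixture 𝒫_m onto the direction v equals Σ_j α_j d_j. -/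
open MeasureTheory ProbabilityTheory
open scoped RealInnerProductSpace

noncomputable section

namespace FMSaux

open Filter Real

lemma exp_deriv (x : ℝ) :
    HasDerivAt (fun y : ℝ => -Real.exp (-y^2/2)) (x * Real.exp (-x^2/2)) x := by
  have h1 : HasDerivAt (fun y : ℝ => -y^2/2) (-x) x := by
    have := ((hasDerivAt_pow 2 x).neg.div_const 2)
    exact this.congr_deriv (by norm_num; ring)
  have h2 := h1.exp
  exact h2.neg.congr_deriv (by ring)

lemma tendsto_exp_top : Tendsto (fun x : ℝ => -Real.exp (-x^2/2)) atTop (nhds 0) := by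
  have h0 : Tendsto (fun x : ℝ => x^2) atTop atTop :=
    tendsto_pow_atTop (by norm_num : 2 ≠ 0)
  have h1 : Tendsto (fun x : ℝ => -x^2/2) atTop atBot := by
    apply Tendsto.atBot_div_const (by norm_num : (0:ℝ) < 2)
    exact tendsto_neg_atBot_iff.mpr h0
  have := (Real.tendsto_exp_atBot.comp h1).neg
  simpa [Function.comp] using this

lemma tendsto_exp_bot : Tendsto (fun x : ℝ => -Real.exp (-x^2/2)) atBot (nhds 0) := by
  have h := tendsto_exp_top.comp tendsto_neg_atBot_atTop
  have heq : ((fun x : ℝ => -Real.exp (-x^2/2)) ∘ Neg.neg) = fun x : ℝ => -Real.exp (-x^2/2) := by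
    funext x; simp [Function.comp, neg_sq]
  rwa [heq] at h

lemma int_exp : Integrable (fun x : ℝ => Real.exp (-x^2/2)) := by
  have := integrable_exp_neg_mul_sq (show (0:ℝ) < 1/2 by norm_num)
  convert this using 2 with x
  ring_nf

lemma int_mul_exp : Integrable (fun x : ℝ => x * Real.exp (-x^2/2)) := by
  have := integrable_mul_exp_neg_mul_sq (show (0:ℝ) < 1/2 by norm_num)
  convert this using 2 with x
  ring_nf

lemma int_sq_exp : Integrable (fun x : ℝ => x^2 * Real.exp (-x^2/2)) := by
  have := integrable_rpow_mul_exp_neg_mul_sq (show (0:ℝ) < 1/2 by norm_num)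
    (show (-1:ℝ) < 2 by norm_num)
  convert this using 2 with x
  rw [show ((2:ℝ)) = ((2:ℕ):ℝ) by norm_num, Real.rpow_natCast]
  ring_nf

lemma J1 : ∫ x : ℝ, Real.exp (-x^2/2) = Real.sqrt (2*π) := by
  have := integral_gaussian (1/2)
  rw [show π / (1/2) = 2*π by ring] at this
  rw [← this]
  congr 1 with x
  ring_nf

lemma J2 : ∫ x : ℝ, x * Real.exp (-x^2/2) = 0 := by
  have := integral_of_hasDerivAt_of_tendsto (f := fun y : ℝ => -Real.exp (-y^2/2))
    (f' := fun x : ℝ => x * Real.exp (-x^2/2)) (fun x => exp_deriv x)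
    int_mul_exp tendsto_exp_bot tendsto_exp_top
  simpa using this

lemma J3 : ∫ x : ℝ, x^2 * Real.exp (-x^2/2) = Real.sqrt (2*π) := by
  have hu : ∀ x : ℝ, HasDerivAt (fun y : ℝ => y) ((fun _ : ℝ => (1:ℝ)) x) x :=
    fun x => hasDerivAt_id x
  have hv : ∀ x : ℝ, HasDerivAt (fun y : ℝ => -Real.exp (-y^2/2))
      ((fun x : ℝ => x * Real.exp (-x^2/2)) x) x := fun x => exp_deriv x
  have huv' : Integrable ((fun y : ℝ => y) * fun x : ℝ => x * Real.exp (-x^2/2)) := by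
    have : ((fun y : ℝ => y) * fun x : ℝ => x * Real.exp (-x^2/2))
        = fun x : ℝ => x^2 * Real.exp (-x^2/2) := by
      funext x; simp [Pi.mul_apply]; ring
    rw [this]; exact int_sq_exp
  have hu'v : Integrable ((fun _ : ℝ => (1:ℝ)) * fun y : ℝ => -Real.exp (-y^2/2)) := by
    have : ((fun _ : ℝ => (1:ℝ)) * fun y : ℝ => -Real.exp (-y^2/2))
        = fun x : ℝ => -Real.exp (-x^2/2) := by funext x; simp
    rw [this]; exact int_exp.neg
  have huv : Integrable ((fun y : ℝ => y) * fun y : ℝ => -Real.exp (-y^2/2)) := by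
    have : ((fun y : ℝ => y) * fun y : ℝ => -Real.exp (-y^2/2))
        = fun x : ℝ => -(x * Real.exp (-x^2/2)) := by funext x; simp
    rw [this]; exact int_mul_exp.neg
  have h := integral_mul_deriv_eq_deriv_mul_of_integrable (fun x _ => hu x) (fun x _ => hv x) huv' hu'v huv
  calc ∫ x : ℝ, x^2 * Real.exp (-x^2/2)
      = ∫ x : ℝ, x * (x * Real.exp (-x^2/2)) := by congr 1 with x; ring
    _ = -∫ x : ℝ, (1:ℝ) * -Real.exp (-x^2/2) := h
    _ = ∫ x : ℝ, Real.exp (-x^2/2) := by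
        rw [← integral_neg]; congr 1 with x; ring
    _ = Real.sqrt (2*π) := J1

lemma pdf01 (x : ℝ) : gaussianPDFReal 0 1 x = (Real.sqrt (2*π))⁻¹ * Real.exp (-x^2/2) := by
  simp [gaussianPDFReal]

lemma gauss_eq : gaussianReal 0 1
    = MeasureTheory.volume.withDensity fun x => ((gaussianPDFReal 0 1 x).toNNReal : ENNReal) := by
  rw [gaussianReal_of_var_ne_zero 0 one_ne_zero]
  rfl

lemma meas_pdf : Measurable fun x => (gaussianPDFReal 0 1 x).toNNReal :=
  (measurable_gaussianPDFReal 0 1).real_toNNReal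

lemma integral_gauss (f : ℝ → ℝ) :
    ∫ x, f x ∂(gaussianReal 0 1) = ∫ x, gaussianPDFReal 0 1 x * f x := by
  rw [gauss_eq, integral_withDensity_eq_integral_smul meas_pdf]
  congr 1 with x
  simp [NNReal.smul_def, Real.coe_toNNReal _ (gaussianPDFReal_nonneg 0 1 x)]

lemma integrable_gauss (f : ℝ → ℝ) (h : Integrable fun x => gaussianPDFReal 0 1 x * f x) :
    Integrable f (gaussianReal 0 1) := by
  rw [gauss_eq]
  refine (integrable_withDensity_iff_integrable_smul (E := ℝ) (μ := MeasureTheory.volume)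
    meas_pdf (g := f)).mpr ?_
  apply h.congr
  filter_upwards with x
  simp [NNReal.smul_def, Real.coe_toNNReal _ (gaussianPDFReal_nonneg 0 1 x)]

lemma sqrt2pi_pos : 0 < Real.sqrt (2*π) := Real.sqrt_pos.mpr (by positivity)

lemma K2 : Integrable (fun x : ℝ => x^2) (gaussianReal 0 1) := by
  apply integrable_gauss
  have : (fun x : ℝ => gaussianPDFReal 0 1 x * x^2)
      = fun x : ℝ => (Real.sqrt (2*π))⁻¹ * (x^2 * Real.exp (-x^2/2)) := by
    funext x; rw [pdf01]; ring
  rw [this]; exact int_sq_exp.const_mul _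

lemma K3 : ∫ x, x ∂(gaussianReal 0 1) = 0 := by
  rw [integral_gauss]
  have : (fun x : ℝ => gaussianPDFReal 0 1 x * x)
      = fun x : ℝ => (Real.sqrt (2*π))⁻¹ * (x * Real.exp (-x^2/2)) := by
    funext x; rw [pdf01]; ring
  rw [this, integral_const_mul, J2, mul_zero]

lemma K4 : ∫ x, x^2 ∂(gaussianReal 0 1) = 1 := by
  rw [integral_gauss]
  have : (fun x : ℝ => gaussianPDFReal 0 1 x * x^2)
      = fun x : ℝ => (Real.sqrt (2*π))⁻¹ * (x^2 * Real.exp (-x^2/2)) := by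
    funext x; rw [pdf01]; ring
  rw [this, integral_const_mul, J3, inv_mul_cancel₀ sqrt2pi_pos.ne']

lemma K5 : MemLp (fun x : ℝ => x) 2 (gaussianReal 0 1) :=
  (memLp_two_iff_integrable_sq aestronglyMeasurable_id).2 K2

variable {Ω : Type*} [MeasurableSpace Ω] {P : Measure Ω}

lemma aemeasurable_of_map_gaussian {f : Ω → ℝ}
    (h : Measure.map f P = gaussianReal 0 1) : AEMeasurable f P := by
  by_contra hf
  rw [Measure.map_of_not_aemeasurable hf] at h
  have := congrArg (fun μ => μ Set.univ) h
  simp at this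

lemma nullMeasurableSet_of_add_le [IsProbabilityMeasure P]
    {s : Set Ω} (h : P s + P sᶜ ≤ 1) : NullMeasurableSet s P := by
  set U := toMeasurable P s with hUdef
  set V := toMeasurable P sᶜ with hVdef
  have hU : MeasurableSet U := measurableSet_toMeasurable P s
  have hV : MeasurableSet V := measurableSet_toMeasurable P sᶜ
  have hsU : s ⊆ U := subset_toMeasurable P s
  have hsV : sᶜ ⊆ V := subset_toMeasurable P sᶜ
  have hUV : U ∪ V = Set.univ := by
    apply Set.eq_univ_of_univ_subset
    rw [← Set.union_compl_self s]
    exact Set.union_subset_union hsU hsV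
  have hkey : P (U ∩ V) = 0 := by
    have h1 : P U + P V = P (U ∪ V) + P (U ∩ V) := (measure_union_add_inter U hV).symm
    rw [hUV, measure_univ] at h1
    have h2 : P U + P V ≤ 1 := by
      rw [measure_toMeasurable, measure_toMeasurable]; exact h
    rw [h1] at h2
    by_contra hne
    exact absurd h2 (not_le.mpr (ENNReal.lt_add_right ENNReal.one_ne_top hne))
  refine hU.nullMeasurableSet.congr (ae_eq_set.2 ⟨?_, ?_⟩)
  · refine measure_mono_null ?_ hkey
    intro x hx
    exact ⟨hx.1, hsV hx.2⟩
  · have : s \ U = ∅ := Set.diff_eq_empty.2 hsU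
    simp [this]

lemma aemeasurable_finite_fibers {m : ℕ} [IsProbabilityMeasure P]
    (α : Fin m → ℝ) (hα : ∀ k, 0 ≤ α k) (hαsum : ∑ k, α k = 1)
    (f : Ω → Fin m) (h : ∀ k, P {ω | f ω = k} = ENNReal.ofReal (α k)) :
    AEMeasurable f P := by
  have hfib : ∀ k, NullMeasurableSet {ω | f ω = k} P := by
    intro k
    apply nullMeasurableSet_of_add_le
    have hcompl : {ω | f ω = k}ᶜ = ⋃ k' ∈ Finset.univ.erase k, {ω | f ω = k'} := by
      ext ω
      simp only [Set.mem_compl_iff, Set.mem_setOf_eq, Set.mem_iUnion, Finset.mem_erase,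
        Finset.mem_univ, and_true, exists_prop]
      constructor
      · intro hne; exact ⟨f ω, hne, rfl⟩
      · rintro ⟨k', hk', rfl⟩; exact hk'
    have hle : P {ω | f ω = k}ᶜ ≤ ∑ k' ∈ Finset.univ.erase k, ENNReal.ofReal (α k') := by
      rw [hcompl]
      refine le_trans (measure_biUnion_finset_le _ _) ?_
      exact Finset.sum_le_sum fun k' _ => le_of_eq (h k')
    calc P {ω | f ω = k} + P {ω | f ω = k}ᶜ
        ≤ ENNReal.ofReal (α k) + ∑ k' ∈ Finset.univ.erase k, ENNReal.ofReal (α k') :=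
          add_le_add (le_of_eq (h k)) hle
      _ = ∑ k', ENNReal.ofReal (α k') :=
          Finset.add_sum_erase _ (fun k' => ENNReal.ofReal (α k')) (Finset.mem_univ k)
      _ = ENNReal.ofReal (∑ k', α k') := (ENNReal.ofReal_sum_of_nonneg fun k' _ => hα k').symm
      _ = 1 := by rw [hαsum, ENNReal.ofReal_one]
  have hNM : NullMeasurable f P := by
    intro s _
    have : f ⁻¹' s = ⋃ k ∈ s, {ω | f ω = k} := by
      ext ω; simp
    rw [this]
    exact NullMeasurableSet.biUnion s.to_countable fun k _ => hfib k
  exact hNM.aemeasurable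

lemma iIndepFun_ae_eq {ι : Type*} {β : ι → Type*} {mβ : ∀ i, MeasurableSpace (β i)}
    {f g : ∀ i, Ω → β i}
    (h : iIndepFun f P) (hfg : ∀ i, f i =ᵐ[P] g i) : iIndepFun g P := by
  rw [iIndepFun_iff_measure_inter_preimage_eq_mul] at h ⊢
  intro S sets hsets
  have hae : ∀ᵐ ω ∂P, ∀ i ∈ S, f i ω = g i ω :=
    (ae_ball_iff S.countable_toSet).2 fun i _ => hfg i
  have h1 : ∀ i ∈ S, P (g i ⁻¹' sets i) = P (f i ⁻¹' sets i) := by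
    intro i hi
    exact (measure_congr ((hfg i).preimage (sets i))).symm
  have h2 : P (⋂ i ∈ S, g i ⁻¹' sets i) = P (⋂ i ∈ S, f i ⁻¹' sets i) := by
    apply measure_congr
    filter_upwards [hae] with ω hω
    apply eq_iff_iff.mpr
    rw [show ((⋂ i ∈ S, g i ⁻¹' sets i) ω) = (ω ∈ ⋂ i ∈ S, g i ⁻¹' sets i) from rfl,
      show ((⋂ i ∈ S, f i ⁻¹' sets i) ω) = (ω ∈ ⋂ i ∈ S, f i ⁻¹' sets i) from rfl]
    simp only [Set.mem_iInter, Set.mem_preimage]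
    exact forall₂_congr fun i hi => by rw [hω i hi]
  rw [h2, h (S := S) hsets]
  exact (Finset.prod_congr rfl h1).symm

lemma integrable_mul_L2 {f g : Ω → ℝ} (hf : MemLp f 2 P) (hg : MemLp g 2 P) :
    Integrable (fun ω => f ω * g ω) P := by
  have hbound : ∀ ω, ‖f ω * g ω‖ ≤ (f ω ^ 2 + g ω ^ 2) / 2 := by
    intro ω
    rw [norm_mul, Real.norm_eq_abs, Real.norm_eq_abs]
    nlinarith [sq_nonneg (|f ω| - |g ω|), sq_abs (f ω), sq_abs (g ω), abs_nonneg (f ω),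
      abs_nonneg (g ω)]
  refine Integrable.mono' ((hf.integrable_sq.add hg.integrable_sq).div_const 2)
    (hf.aestronglyMeasurable.mul hg.aestronglyMeasurable) ?_
  filter_upwards with ω using hbound ω

end FMSaux

/-- **Variance of the projection of the FMS mixture.**
For every unit vector `v ∈ ℝ^n`, `E[⟪v,z⟫²] = ∑_j α_j d_j` where
`d_j = (1−γ) + γ⟪v,q_j⟫²`. -/
theorem fms_projected_variance
    {n m l : ℕ} (hn : 0 < n) (hm : 0 < m) (hl : 0 < l)
    (q : Fin m → EuclideanSpace ℝ (Fin n))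
    (α : Fin m → ℝ) (hα : ∀ k, α k ∈ Set.Ioo (0 : ℝ) 1) (hαsum : ∑ k, α k = 1)
    (γ : ℝ) (hγ : γ ∈ Set.Ioo (0 : ℝ) 1)
    {Ω : Type*} [MeasurableSpace Ω] (P : Measure Ω) [IsProbabilityMeasure P]
    (z₀ : Ω → EuclideanSpace ℝ (Fin n)) (zs : Fin l → Ω → ℝ) (idx : Fin l → Ω → Fin m)
    (hz₀ : ∀ i : Fin n, Measure.map (fun ω => z₀ ω i) P = gaussianReal 0 1)
    (hzs : ∀ j : Fin l, Measure.map (zs j) P = gaussianReal 0 1)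
    (hidx : ∀ (j : Fin l) (k : Fin m), P {ω | idx j ω = k} = ENNReal.ofReal (α k))
    (hindep : iIndepFun (FMSFamily z₀ zs idx) P)
    (z : Ω → EuclideanSpace ℝ (Fin n))
    (hz : ∀ ω, z ω = Real.sqrt (1 - γ) • z₀ ω
        + Real.sqrt (γ / l) • ∑ j : Fin l, zs j ω • q (idx j ω))
    (v : EuclideanSpace ℝ (Fin n)) (hv : ‖v‖ = 1) :
    ∫ ω, ⟪v, z ω⟫ ^ 2 ∂P
      = ∑ j : Fin m, α j * ((1 - γ) + γ * ⟪v, q j⟫ ^ 2) := by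
  classical
  obtain ⟨hγ0, hγ1⟩ := hγ
  have hl0 : ((l:ℝ)) ≠ 0 := Nat.cast_ne_zero.mpr hl.ne'
  set c : Fin m → ℝ := fun k => ⟪v, q k⟫ with hcdef
  set B : ℝ := ∑ k, α k * c k ^ 2 with hBdef
  -- a.e.-measurability of the ingredients
  have hz₀m : ∀ i, AEMeasurable (fun ω => z₀ ω i) P :=
    fun i => FMSaux.aemeasurable_of_map_gaussian (hz₀ i)
  have hzsm : ∀ j, AEMeasurable (zs j) P :=
    fun j => FMSaux.aemeasurable_of_map_gaussian (hzs j)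
  have hidxm : ∀ j, AEMeasurable (idx j) P :=
    fun j => FMSaux.aemeasurable_finite_fibers α (fun k => (hα k).1.le) hαsum (idx j) (hidx j)
  -- measurable modifications
  set Z : Fin n → Ω → ℝ := fun i => (hz₀m i).mk _ with hZdef
  set W : Fin l → Ω → ℝ := fun j => (hzsm j).mk _ with hWdef
  set I : Fin l → Ω → Fin m := fun j => (hidxm j).mk _ with hIdef
  have hZme : ∀ i, Measurable (Z i) := fun i => (hz₀m i).measurable_mk
  have hWme : ∀ j, Measurable (W j) := fun j => (hzsm j).measurable_mk
  have hIme : ∀ j, Measurable (I j) := fun j => (hidxm j).measurable_mk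
  have hZae : ∀ i, (fun ω => z₀ ω i) =ᵐ[P] Z i := fun i => (hz₀m i).ae_eq_mk
  have hWae : ∀ j, zs j =ᵐ[P] W j := fun j => (hzsm j).ae_eq_mk
  have hIae : ∀ j, idx j =ᵐ[P] I j := fun j => (hidxm j).ae_eq_mk
  set g : ∀ k : FMSIndex n l, Ω → FMSCodomain n m l k := fun k =>
    match k with
    | Sum.inl i => Z i
    | Sum.inr (Sum.inl j) => W j
    | Sum.inr (Sum.inr j) => I j
    with hgdef
  have hgme : ∀ k, Measurable (g k) := by
    rintro (i | j | j)
    · exact hZme i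
    · exact hWme j
    · exact hIme j
  have hindep' : iIndepFun g P := by
    refine FMSaux.iIndepFun_ae_eq hindep ?_
    rintro (i | j | j)
    · exact hZae i
    · exact hWae j
    · exact hIae j
  -- distributions of modifications
  have hZmap : ∀ i, Measure.map (Z i) P = gaussianReal 0 1 := fun i => by
    rw [← Measure.map_congr (hZae i)]; exact hz₀ i
  have hWmap : ∀ j, Measure.map (W j) P = gaussianReal 0 1 := fun j => by
    rw [← Measure.map_congr (hWae j)]; exact hzs j
  have hIfib : ∀ j k, P {ω | I j ω = k} = ENNReal.ofReal (α k) := by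
    intro j k
    have hsets : ({ω | I j ω = k} : Set Ω) =ᵐ[P] ({ω | idx j ω = k} : Set Ω) := by
      filter_upwards [hIae j] with ω hω
      change (I j ω = k) = (idx j ω = k)
      rw [hω]
    exact (measure_congr hsets).trans (hidx j k)
  -- moments
  have hmemZ : ∀ i, MemLp (Z i) 2 P := fun i => by
    have h1 : MemLp (fun x : ℝ => x) 2 (Measure.map (Z i) P) := by
      rw [hZmap i]; exact FMSaux.K5
    exact (memLp_map_measure_iff aestronglyMeasurable_id (hZme i).aemeasurable).1 h1
  have hmemW : ∀ j, MemLp (W j) 2 P := fun j => by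
    have h1 : MemLp (fun x : ℝ => x) 2 (Measure.map (W j) P) := by
      rw [hWmap j]; exact FMSaux.K5
    exact (memLp_map_measure_iff aestronglyMeasurable_id (hWme j).aemeasurable).1 h1
  have hEZ : ∀ i, ∫ ω, Z i ω ∂P = 0 := fun i => by
    have h1 : ∫ x, x ∂(Measure.map (Z i) P) = ∫ ω, Z i ω ∂P :=
      integral_map (hZme i).aemeasurable aestronglyMeasurable_id
    rw [← h1, hZmap i, FMSaux.K3]
  have hEW : ∀ j, ∫ ω, W j ω ∂P = 0 := fun j => by
    have h1 : ∫ x, x ∂(Measure.map (W j) P) = ∫ ω, W j ω ∂P :=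
      integral_map (hWme j).aemeasurable aestronglyMeasurable_id
    rw [← h1, hWmap j, FMSaux.K3]
  have hEZ2 : ∀ i, ∫ ω, Z i ω ^ 2 ∂P = 1 := fun i => by
    have h1 : ∫ x, (x:ℝ)^2 ∂(Measure.map (Z i) P) = ∫ ω, Z i ω ^ 2 ∂P :=
      integral_map (hZme i).aemeasurable
        ((measurable_id.pow_const 2).aestronglyMeasurable)
    rw [← h1, hZmap i, FMSaux.K4]
  have hEW2 : ∀ j, ∫ ω, W j ω ^ 2 ∂P = 1 := fun j => by
    have h1 : ∫ x, (x:ℝ)^2 ∂(Measure.map (W j) P) = ∫ ω, W j ω ^ 2 ∂P :=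
      integral_map (hWme j).aemeasurable
        ((measurable_id.pow_const 2).aestronglyMeasurable)
    rw [← h1, hWmap j, FMSaux.K4]
  have hEc2 : ∀ j, ∫ ω, c (I j ω) ^ 2 ∂P = B := by
    intro j
    haveI : IsProbabilityMeasure (Measure.map (I j) P) :=
      Measure.isProbabilityMeasure_map (hIme j).aemeasurable
    have h1 : ∫ k, c k ^ 2 ∂(Measure.map (I j) P) = ∫ ω, c (I j ω) ^ 2 ∂P :=
      integral_map (hIme j).aemeasurable
        (measurable_of_countable (fun k => c k ^ 2)).aestronglyMeasurable
    have h2 : ∀ k, Measure.map (I j) P {k} = ENNReal.ofReal (α k) := fun k => by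
      rw [Measure.map_apply (hIme j) (measurableSet_singleton k)]
      exact hIfib j k
    rw [← h1, integral_fintype (.of_finite), hBdef]
    refine Finset.sum_congr rfl fun k _ => ?_
    rw [Measure.real, h2 k, ENNReal.toReal_ofReal (hα k).1.le, smul_eq_mul]
  -- the mixture scalars
  have hcm : Measurable c := measurable_of_countable c
  have hcIm : ∀ j, Measurable fun ω => c (I j ω) := fun j => hcm.comp (hIme j)
  set Y : Fin l → Ω → ℝ := fun j ω => W j ω * c (I j ω) with hYdef
  have hYme : ∀ j, Measurable (Y j) := fun j => (hWme j).mul (hcIm j)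
  set C : ℝ := ∑ k, c k ^ 2 with hCdef
  have hcC : ∀ k, c k ^ 2 ≤ C :=
    fun k => Finset.single_le_sum (fun k' _ => sq_nonneg (c k')) (Finset.mem_univ k)
  have hmemY : ∀ j, MemLp (Y j) 2 P := by
    intro j
    refine (memLp_two_iff_integrable_sq (hYme j).aestronglyMeasurable).2 ?_
    refine Integrable.mono' ((hmemW j).integrable_sq.mul_const C)
      (((hYme j).pow_const 2).aestronglyMeasurable) ?_
    filter_upwards with ω
    rw [Real.norm_eq_abs, abs_of_nonneg (sq_nonneg _), hYdef]
    calc (W j ω * c (I j ω)) ^ 2 = W j ω ^ 2 * c (I j ω) ^ 2 := by ring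
      _ ≤ W j ω ^ 2 * C := mul_le_mul_of_nonneg_left (hcC _) (sq_nonneg _)
  -- independence consequences: expectations of products
  have E1 : ∀ i i', ∫ ω, Z i ω * Z i' ω ∂P = if i = i' then 1 else 0 := by
    intro i i'
    by_cases h : i = i'
    · subst h
      rw [if_pos rfl]
      simp_rw [← pow_two]
      exact hEZ2 i
    · rw [if_neg h]
      have hind : IndepFun (Z i) (Z i') P :=
        hindep'.indepFun (show (Sum.inl i : FMSIndex n l) ≠ Sum.inl i' by simpa using h)
      rw [hind.integral_fun_mul_eq_mul_integral (hZme i).aestronglyMeasurable (hZme i').aestronglyMeasurable,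
        hEZ i, hEZ i', mul_zero]
  have E2 : ∀ (i : Fin n) (j : Fin l), ∫ ω, Z i ω * Y j ω ∂P = 0 := by
    intro i j
    have hpair : IndepFun (fun ω => (Z i ω, I j ω)) (W j) P :=
      hindep'.indepFun_prodMk hgme (Sum.inl i) (Sum.inr (Sum.inr j)) (Sum.inr (Sum.inl j))
        (by simp) (by simp)
    have hind : IndepFun (fun ω => Z i ω * c (I j ω)) (W j) P := by
      have := hpair.comp (φ := fun p : ℝ × Fin m => p.1 * c p.2) (ψ := id)
        (measurable_fst.mul (hcm.comp measurable_snd)) measurable_id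
      exact this
    have heq : ∫ ω, Z i ω * Y j ω ∂P = ∫ ω, (Z i ω * c (I j ω)) * W j ω ∂P := by
      congr 1 with ω
      rw [hYdef]
      ring
    rw [heq, hind.integral_fun_mul_eq_mul_integral
      ((hZme i).mul (hcIm j)).aestronglyMeasurable
      (hWme j).aestronglyMeasurable, hEW j, mul_zero]
  have E3 : ∀ j, ∫ ω, Y j ω ∂P = 0 := by
    intro j
    have hind : IndepFun (W j) (fun ω => c (I j ω)) P := by
      have hbase : IndepFun (W j) (I j) P :=
        hindep'.indepFun (show (Sum.inr (Sum.inl j) : FMSIndex n l) ≠ Sum.inr (Sum.inr j) by simp)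
      exact hbase.comp measurable_id hcm
    rw [hYdef]
    rw [hind.integral_fun_mul_eq_mul_integral (hWme j).aestronglyMeasurable
      (hcIm j).aestronglyMeasurable, hEW j, zero_mul]
  have E4 : ∀ j j', j ≠ j' → ∫ ω, Y j ω * Y j' ω ∂P = 0 := by
    intro j j' hjj'
    have hpair : IndepFun (fun ω => (W j ω, I j ω)) (fun ω => (W j' ω, I j' ω)) P :=
      hindep'.indepFun_prodMk_prodMk hgme (Sum.inr (Sum.inl j)) (Sum.inr (Sum.inr j))
        (Sum.inr (Sum.inl j')) (Sum.inr (Sum.inr j'))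
        (by simp [hjj']) (by simp) (by simp) (by simp [hjj'])
    have hind : IndepFun (Y j) (Y j') P := by
      have := hpair.comp (φ := fun p : ℝ × Fin m => p.1 * c p.2)
        (ψ := fun p : ℝ × Fin m => p.1 * c p.2)
        (measurable_fst.mul (hcm.comp measurable_snd))
        (measurable_fst.mul (hcm.comp measurable_snd))
      exact this
    rw [hind.integral_fun_mul_eq_mul_integral (hYme j).aestronglyMeasurable (hYme j').aestronglyMeasurable,
      E3 j, zero_mul]
  have E5 : ∀ j, ∫ ω, Y j ω * Y j ω ∂P = B := by
    intro j
    have hbase : IndepFun (W j) (I j) P :=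
      hindep'.indepFun (show (Sum.inr (Sum.inl j) : FMSIndex n l) ≠ Sum.inr (Sum.inr j) by simp)
    have hind : IndepFun (fun ω => W j ω ^ 2) (fun ω => c (I j ω) ^ 2) P :=
      hbase.comp (measurable_id.pow_const 2) (hcm.pow_const 2)
    have heq : ∫ ω, Y j ω * Y j ω ∂P = ∫ ω, (W j ω ^ 2) * (c (I j ω) ^ 2) ∂P := by
      congr 1 with ω
      rw [hYdef]
      ring
    rw [heq, hind.integral_fun_mul_eq_mul_integral ((hWme j).pow_const 2).aestronglyMeasurable
      (((hcIm j)).pow_const 2).aestronglyMeasurable,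
      hEW2 j, hEc2 j, one_mul]
  -- the sums
  set S : Ω → ℝ := fun ω => ∑ i, v i * Z i ω with hSdef
  set T : Ω → ℝ := fun ω => ∑ j, Y j ω with hTdef
  have hmemS : MemLp S 2 P := by
    have := memLp_finset_sum (Finset.univ)
      (fun i (_ : i ∈ Finset.univ) => (hmemZ i).const_mul (v i))
    simpa [hSdef] using this
  have hmemT : MemLp T 2 P := by
    have := memLp_finset_sum (Finset.univ) (fun j (_ : j ∈ Finset.univ) => hmemY j)
    simpa [hTdef] using this
  -- second moments of the sums
  have hES2 : ∫ ω, S ω * S ω ∂P = 1 := by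
    have hint : ∀ (i i' : Fin n), Integrable (fun ω => (v i * v i') * (Z i ω * Z i' ω)) P :=
      fun i i' => (FMSaux.integrable_mul_L2 (hmemZ i) (hmemZ i')).const_mul _
    have hexp : (fun ω => S ω * S ω)
        = fun ω => ∑ i, ∑ i', (v i * v i') * (Z i ω * Z i' ω) := by
      funext ω
      rw [hSdef, Finset.sum_mul_sum]
      exact Finset.sum_congr rfl fun i _ => Finset.sum_congr rfl fun i' _ => by ring
    rw [hexp, integral_finset_sum _ fun i _ => integrable_finset_sum _ fun i' _ => hint i i']
    have hterm : ∀ i, ∫ ω, ∑ i', (v i * v i') * (Z i ω * Z i' ω) ∂P = v i * v i := by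
      intro i
      rw [integral_finset_sum _ fun i' _ => hint i i']
      have h1 : ∀ i', ∫ ω, (v i * v i') * (Z i ω * Z i' ω) ∂P
          = if i = i' then v i * v i' else 0 := by
        intro i'
        rw [integral_const_mul, E1 i i']
        by_cases h : i = i' <;> simp [h]
      rw [Finset.sum_congr rfl fun i' _ => h1 i',
        Finset.sum_ite_eq Finset.univ i (fun i' => v i * v i')]
      simp
    rw [Finset.sum_congr rfl fun i _ => hterm i]
    have h2 : ⟪v, v⟫ = ∑ i, v i * v i := by
      simp only [PiLp.inner_apply, RCLike.inner_apply, conj_trivial]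
    rw [← h2, real_inner_self_eq_norm_sq, hv, one_pow]
  have hEST : ∫ ω, S ω * T ω ∂P = 0 := by
    have hint : ∀ (i : Fin n) (j : Fin l), Integrable (fun ω => v i * (Z i ω * Y j ω)) P :=
      fun i j => (FMSaux.integrable_mul_L2 (hmemZ i) (hmemY j)).const_mul _
    have hexp : (fun ω => S ω * T ω)
        = fun ω => ∑ i, ∑ j, v i * (Z i ω * Y j ω) := by
      funext ω
      rw [hSdef, hTdef, Finset.sum_mul_sum]
      exact Finset.sum_congr rfl fun i _ => Finset.sum_congr rfl fun j _ => by ring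
    rw [hexp, integral_finset_sum _ fun i _ => integrable_finset_sum _ fun j _ => hint i j]
    refine Finset.sum_eq_zero fun i _ => ?_
    rw [integral_finset_sum _ fun j _ => hint i j]
    refine Finset.sum_eq_zero fun j _ => ?_
    rw [integral_const_mul, E2 i j, mul_zero]
  have hET2 : ∫ ω, T ω * T ω ∂P = (l:ℝ) * B := by
    have hint : ∀ (j j' : Fin l), Integrable (fun ω => Y j ω * Y j' ω) P :=
      fun j j' => FMSaux.integrable_mul_L2 (hmemY j) (hmemY j')
    have hexp : (fun ω => T ω * T ω) = fun ω => ∑ j, ∑ j', Y j ω * Y j' ω := by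
      funext ω
      rw [hTdef, Finset.sum_mul_sum]
    rw [hexp, integral_finset_sum _ fun j _ => integrable_finset_sum _ fun j' _ => hint j j']
    have hterm : ∀ j, ∫ ω, ∑ j', Y j ω * Y j' ω ∂P = B := by
      intro j
      rw [integral_finset_sum _ fun j' _ => hint j j']
      have h1 : ∀ j', ∫ ω, Y j ω * Y j' ω ∂P = if j = j' then B else 0 := by
        intro j'
        by_cases h : j = j'
        · subst h; rw [if_pos rfl]; exact E5 j
        · rw [if_neg h]; exact E4 j j' h
      rw [Finset.sum_congr rfl fun j' _ => h1 j',
        Finset.sum_ite_eq Finset.univ j (fun _ => B)]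
      simp
    rw [Finset.sum_congr rfl fun j _ => hterm j]
    simp [Finset.sum_const, Finset.card_univ, nsmul_eq_mul]
  -- rewrite the integrand a.e.
  set a : ℝ := Real.sqrt (1 - γ) with hadef
  set b : ℝ := Real.sqrt (γ / l) with hbdef
  have hkey : (fun ω => (⟪v, z ω⟫:ℝ) ^ 2) =ᵐ[P] fun ω => (a * S ω + b * T ω) ^ 2 := by
    have hae : ∀ᵐ ω ∂P, (∀ i, z₀ ω i = Z i ω) ∧ (∀ j, zs j ω = W j ω)
        ∧ (∀ j, idx j ω = I j ω) :=
      ((ae_all_iff.2 hZae).and ((ae_all_iff.2 hWae).and (ae_all_iff.2 hIae)))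
    filter_upwards [hae] with ω hω
    obtain ⟨h1, h2, h3⟩ := hω
    have hinner : (⟪v, z ω⟫:ℝ) = a * S ω + b * T ω := by
      rw [hz ω, inner_add_right, real_inner_smul_right, real_inner_smul_right, inner_sum]
      congr 1
      · rw [hSdef]
        congr 1
        have : (⟪v, z₀ ω⟫:ℝ) = ∑ i, v i * z₀ ω i := by
          simp [PiLp.inner_apply, RCLike.inner_apply, conj_trivial, mul_comm]
        rw [this]
        exact Finset.sum_congr rfl fun i _ => by rw [h1 i]
      · rw [hTdef]
        congr 1
        refine Finset.sum_congr rfl fun j _ => ?_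
        rw [real_inner_smul_right, h2 j, h3 j]
    rw [hinner]
  rw [integral_congr_ae hkey]
  -- expand the square and integrate
  have hSS : Integrable (fun ω => S ω * S ω) P := FMSaux.integrable_mul_L2 hmemS hmemS
  have hST : Integrable (fun ω => S ω * T ω) P := FMSaux.integrable_mul_L2 hmemS hmemT
  have hTT : Integrable (fun ω => T ω * T ω) P := FMSaux.integrable_mul_L2 hmemT hmemT
  have hexpand : (fun ω => (a * S ω + b * T ω) ^ 2)
      = fun ω => a ^ 2 * (S ω * S ω)
        + ((2 * a * b) * (S ω * T ω) + b ^ 2 * (T ω * T ω)) := by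
    funext ω; ring
  have hint1 : Integrable (fun ω => a ^ 2 * (S ω * S ω)) P := hSS.const_mul _
  have hint2 : Integrable (fun ω => 2 * a * b * (S ω * T ω)) P := hST.const_mul _
  have hint3 : Integrable (fun ω => b ^ 2 * (T ω * T ω)) P := hTT.const_mul _
  have hint23 : Integrable (fun ω => 2 * a * b * (S ω * T ω) + b ^ 2 * (T ω * T ω)) P :=
    hint2.add hint3
  rw [hexpand, integral_add hint1 hint23, integral_add hint2 hint3,
    integral_const_mul, integral_const_mul, integral_const_mul, hES2, hEST, hET2]
  have ha2 : a ^ 2 = 1 - γ := Real.sq_sqrt (by linarith)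
  have hb2 : b ^ 2 = γ / l := Real.sq_sqrt (div_nonneg hγ0.le (Nat.cast_nonneg l))
  have hRHS : ∑ j : Fin m, α j * ((1 - γ) + γ * (⟪v, q j⟫:ℝ) ^ 2) = (1 - γ) + γ * B := by
    rw [hBdef]
    simp only [hcdef]
    have h1 : ∀ j : Fin m, α j * ((1 - γ) + γ * (⟪v, q j⟫:ℝ) ^ 2)
        = (1 - γ) * α j + γ * (α j * (⟪v, q j⟫:ℝ) ^ 2) := fun j => by ring
    rw [Finset.sum_congr rfl fun j _ => h1 j, Finset.sum_add_distrib, ← Finset.mul_sum,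
      ← Finset.mul_sum, hαsum, mul_one]
  rw [hRHS, ha2, hb2]
  field_simp
  ring

end
end

section
/- For every unit vector v ∈ ℝ^n, E[⟨v, z⟩⁴] = 3·((l−1)/l)·(Σ_{j=1}^m α_j d_j)² + (3/l)·Σ_{j=1}^m α_j d_j², where d_j := (1−γ) + γ·⟨v, q_j⟩². -/
open MeasureTheory ProbabilityTheory
open scoped RealInnerProductSpace

noncomputable section

section FMSAuxHelpers
open Real Filter Asymptotics Set
namespace FMSAux

lemma intJ (k : ℕ) : Integrable (fun x : ℝ => x ^ k * Real.exp (-(2⁻¹ : ℝ) * x ^ 2)) := by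
  have h := integrable_rpow_mul_exp_neg_mul_sq (b := (2:ℝ)⁻¹) (by norm_num)
    (s := (k : ℝ)) (lt_of_lt_of_le neg_one_lt_zero (Nat.cast_nonneg k))
  simpa [Real.rpow_natCast] using h

lemma tendstoJ_top (k : ℕ) :
    Tendsto (fun x : ℝ => x ^ k * Real.exp (-(2⁻¹ : ℝ) * x ^ 2)) atTop (nhds 0) := by
  have h := rpow_mul_exp_neg_mul_sq_isLittleO_exp_neg (b := (2:ℝ)⁻¹) (by norm_num) (k : ℝ)
  have h' : (fun x : ℝ => x ^ k * Real.exp (-(2⁻¹ : ℝ) * x ^ 2)) =o[atTop]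
      fun x : ℝ => Real.exp (-(1/2) * x) := by
    simpa [Real.rpow_natCast] using h
  refine h'.isBigO.trans_tendsto ?_
  have : Tendsto (fun x : ℝ => -(1/2) * x) atTop atBot :=
    Tendsto.const_mul_atTop_of_neg (by norm_num) tendsto_id
  exact Real.tendsto_exp_atBot.comp this

lemma tendstoJ_bot (k : ℕ) :
    Tendsto (fun x : ℝ => x ^ k * Real.exp (-(2⁻¹ : ℝ) * x ^ 2)) atBot (nhds 0) := by
  have h1 : Tendsto (fun x : ℝ => (-1:ℝ)^k * (x ^ k * Real.exp (-(2⁻¹ : ℝ) * x ^ 2)))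
      atTop (nhds 0) := by simpa using (tendstoJ_top k).const_mul ((-1:ℝ)^k)
  have h2 := h1.comp tendsto_neg_atBot_atTop
  have heq : ((fun x : ℝ => (-1:ℝ)^k * (x ^ k * Real.exp (-(2⁻¹ : ℝ) * x ^ 2))) ∘ fun x : ℝ => -x)
      = fun x : ℝ => x ^ k * Real.exp (-(2⁻¹ : ℝ) * x ^ 2) := by
    funext x
    simp only [Function.comp_apply, neg_sq, ← mul_assoc, ← mul_pow]
    norm_num
  rwa [heq] at h2

/-- integration by parts recursion -/
lemma J_rec (k : ℕ) :
    (∫ x : ℝ, x ^ (k + 2) * Real.exp (-(2⁻¹ : ℝ) * x ^ 2))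
      = (k + 1 : ℝ) * ∫ x : ℝ, x ^ k * Real.exp (-(2⁻¹ : ℝ) * x ^ 2) := by
  set g := fun x : ℝ => x ^ (k + 1) * Real.exp (-(2⁻¹ : ℝ) * x ^ 2) with hg
  set g' := fun x : ℝ => (k + 1 : ℝ) * (x ^ k * Real.exp (-(2⁻¹ : ℝ) * x ^ 2))
      - x ^ (k + 2) * Real.exp (-(2⁻¹ : ℝ) * x ^ 2) with hg'
  have hd : ∀ x : ℝ, HasDerivAt g (g' x) x := by
    intro x
    have h1 : HasDerivAt (fun x : ℝ => x ^ (k + 1)) ((k + 1 : ℝ) * x ^ k) x := by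
      simpa using hasDerivAt_pow (k + 1) x
    have h2 : HasDerivAt (fun x : ℝ => Real.exp (-(2⁻¹ : ℝ) * x ^ 2))
        ((-x) * Real.exp (-(2⁻¹ : ℝ) * x ^ 2)) x := by
      have hinner : HasDerivAt (fun x : ℝ => -(2⁻¹ : ℝ) * x ^ 2) (-x) x := by
        have := (hasDerivAt_pow 2 x).const_mul (-(2⁻¹ : ℝ))
        simpa using this.congr_deriv (by ring)
      simpa [mul_comm] using hinner.exp
    have := h1.mul h2
    refine this.congr_deriv ?_
    show _ = (k + 1 : ℝ) * (x ^ k * Real.exp (-(2⁻¹ : ℝ) * x ^ 2))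
        - x ^ (k + 2) * Real.exp (-(2⁻¹ : ℝ) * x ^ 2)
    ring
  have hint : Integrable g' := ((intJ k).const_mul _).sub (intJ (k + 2))
  have h0 : (∫ x : ℝ, g' x) = 0 := by
    rw [integral_of_hasDerivAt_of_tendsto hd hint (tendstoJ_bot (k+1)) (tendstoJ_top (k+1))]
    simp
  have hsplit : (∫ x : ℝ, g' x)
      = (k + 1 : ℝ) * (∫ x : ℝ, x ^ k * Real.exp (-(2⁻¹ : ℝ) * x ^ 2))
        - ∫ x : ℝ, x ^ (k + 2) * Real.exp (-(2⁻¹ : ℝ) * x ^ 2) := by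
    rw [hg', integral_sub ((intJ k).const_mul _) (intJ (k + 2)), integral_const_mul]
  linarith [h0, hsplit]

lemma J_odd (k : ℕ) (hk : Odd k) :
    (∫ x : ℝ, x ^ k * Real.exp (-(2⁻¹ : ℝ) * x ^ 2)) = 0 := by
  have h := integral_neg_eq_self (fun x : ℝ => x ^ k * Real.exp (-(2⁻¹ : ℝ) * x ^ 2))
      (volume : Measure ℝ)
  have heq : (fun x : ℝ => (-x) ^ k * Real.exp (-(2⁻¹ : ℝ) * (-x) ^ 2))
      = fun x : ℝ => -(x ^ k * Real.exp (-(2⁻¹ : ℝ) * x ^ 2)) := by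
    funext x; rw [hk.neg_pow]; simp [neg_sq]
  rw [heq, integral_neg] at h
  linarith

lemma J_zero : (∫ x : ℝ, x ^ 0 * Real.exp (-(2⁻¹ : ℝ) * x ^ 2)) = Real.sqrt (2 * Real.pi) := by
  simp only [pow_zero, one_mul]
  rw [show (∫ x : ℝ, Real.exp (-(2⁻¹ : ℝ) * x ^ 2)) = Real.sqrt (Real.pi / 2⁻¹) from
    integral_gaussian 2⁻¹]
  rw [mul_comm]
  norm_num

lemma J_two : (∫ x : ℝ, x ^ 2 * Real.exp (-(2⁻¹ : ℝ) * x ^ 2)) = Real.sqrt (2 * Real.pi) := by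
  have := J_rec 0
  rw [J_zero] at this
  simpa using this

lemma J_four : (∫ x : ℝ, x ^ 4 * Real.exp (-(2⁻¹ : ℝ) * x ^ 2)) = 3 * Real.sqrt (2 * Real.pi) := by
  have := J_rec 2
  rw [J_two] at this
  have h3 : ((2:ℕ) : ℝ) + 1 = 3 := by norm_num
  rw [h3] at this
  exact this


lemma gaussianPDFReal_std (x : ℝ) :
    gaussianPDFReal 0 1 x = (Real.sqrt (2 * Real.pi))⁻¹ * Real.exp (-(2⁻¹ : ℝ) * x ^ 2) := by
  unfold gaussianPDFReal
  simp only [NNReal.coe_one, mul_one, sub_zero]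
  congr 1
  congr 1
  ring

lemma integral_gaussianReal_std (g : ℝ → ℝ) :
    ∫ x, g x ∂(gaussianReal 0 1) = ∫ x, gaussianPDFReal 0 1 x * g x := by
  rw [gaussianReal_of_var_ne_zero 0 one_ne_zero]
  have hpdf : gaussianPDF 0 1 = fun x => ((Real.toNNReal (gaussianPDFReal 0 1 x)) : ENNReal) := rfl
  rw [hpdf, integral_withDensity_eq_integral_smul
    ((measurable_gaussianPDFReal 0 1).real_toNNReal) g]
  congr 1; funext x
  rw [NNReal.smul_def, Real.coe_toNNReal _ (gaussianPDFReal_nonneg 0 1 x), smul_eq_mul]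

lemma gauss_moment (k : ℕ) :
    ∫ x, x ^ k ∂(gaussianReal 0 1)
      = (Real.sqrt (2 * Real.pi))⁻¹ * ∫ x : ℝ, x ^ k * Real.exp (-(2⁻¹ : ℝ) * x ^ 2) := by
  rw [integral_gaussianReal_std (fun x => x ^ k), ← integral_const_mul]
  congr 1; funext x
  rw [gaussianPDFReal_std]; ring

lemma sqrt_two_pi_pos : 0 < Real.sqrt (2 * Real.pi) :=
  Real.sqrt_pos.2 (by positivity)

lemma gauss_moment_one : ∫ x, x ^ 1 ∂(gaussianReal 0 1) = 0 := by
  rw [gauss_moment, J_odd 1 (by decide)]; ring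

lemma gauss_moment_two : ∫ x, x ^ 2 ∂(gaussianReal 0 1) = 1 := by
  rw [gauss_moment, J_two, inv_mul_cancel₀ sqrt_two_pi_pos.ne']

lemma gauss_moment_three : ∫ x, x ^ 3 ∂(gaussianReal 0 1) = 0 := by
  rw [gauss_moment, J_odd 3 (by decide)]; ring

lemma gauss_moment_four : ∫ x, x ^ 4 ∂(gaussianReal 0 1) = 3 := by
  rw [gauss_moment, J_four, mul_comm (3 : ℝ), ← mul_assoc,
    inv_mul_cancel₀ sqrt_two_pi_pos.ne', one_mul]

lemma gauss_integrable_pow (k : ℕ) :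
    Integrable (fun x : ℝ => x ^ k) (gaussianReal 0 1) := by
  rw [gaussianReal_of_var_ne_zero 0 one_ne_zero]
  rw [integrable_withDensity_iff (measurable_gaussianPDF 0 1)
    (Filter.Eventually.of_forall fun x => ENNReal.ofReal_lt_top)]
  have : (fun x : ℝ => x ^ k * (gaussianPDF 0 1 x).toReal)
      = fun x : ℝ => (Real.sqrt (2 * Real.pi))⁻¹ * (x ^ k * Real.exp (-(2⁻¹ : ℝ) * x ^ 2)) := by
    funext x
    rw [gaussianPDF, ENNReal.toReal_ofReal (gaussianPDFReal_nonneg 0 1 x), gaussianPDFReal_std]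
    ring
  rw [this]
  exact (intJ k).const_mul _


variable {Ω : Type*} [MeasurableSpace Ω] {P : Measure Ω}

lemma nullMeasurableSet_of_compl [IsProbabilityMeasure P] {A : Set Ω}
    (h : P A + P Aᶜ = 1) : NullMeasurableSet A P := by
  set t := toMeasurable P A with ht
  set u := toMeasurable P Aᶜ with hu
  have htu : t ∪ u = Set.univ := by
    apply Set.eq_univ_of_univ_subset
    rw [← Set.union_compl_self A]
    exact Set.union_subset_union (subset_toMeasurable P A) (subset_toMeasurable P Aᶜ)
  have hsum : P (t ∪ u) + P (t ∩ u) = P t + P u :=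
    measure_union_add_inter t (measurableSet_toMeasurable P Aᶜ)
  rw [htu, measure_univ, measure_toMeasurable, measure_toMeasurable, h] at hsum
  have hnull : P (t ∩ u) = 0 := by
    have h1 : (1 : ENNReal) + P (t ∩ u) = 1 + 0 := by rw [add_zero]; exact hsum
    exact (ENNReal.add_right_inj ENNReal.one_ne_top).mp h1
  have hdiff : P (t \ A) = 0 := by
    refine measure_mono_null ?_ hnull
    intro x hx
    exact ⟨hx.1, subset_toMeasurable P Aᶜ hx.2⟩
  refine (measurableSet_toMeasurable P A).nullMeasurableSet.congr ?_
  rw [Filter.eventuallyEq_set]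
  have : ∀ᵐ ω ∂P, ω ∉ t \ A := by
    rw [ae_iff]; simp only [not_not]; exact hdiff
  filter_upwards [this] with ω hω
  constructor
  · intro htω
    by_contra hA
    exact hω ⟨htω, hA⟩
  · exact fun hA => subset_toMeasurable P A hA

lemma aemeasurable_fin_of_fiber_measure [IsProbabilityMeasure P] {m : ℕ} (hm : 0 < m)
    {f : Ω → Fin m} (α : Fin m → ℝ) (hα0 : ∀ k, 0 ≤ α k) (hsum : ∑ k, α k = 1)
    (hf : ∀ k, P {ω | f ω = k} = ENNReal.ofReal (α k)) : AEMeasurable f P := by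
  set A : Fin m → Set Ω := fun k => {ω | f ω = k} with hA
  have hAdisj : ∀ a b : Fin m, a ≠ b → A a ∩ A b = ∅ := by
    intro a b hab
    ext ω; simp only [hA, Set.mem_inter_iff, Set.mem_setOf_eq, Set.mem_empty_iff_false,
      iff_false, not_and]
    intro h1 h2; exact hab (h1 ▸ h2 ▸ rfl)
  have hofsum : ∑ k : Fin m, ENNReal.ofReal (α k) = 1 := by
    rw [← ENNReal.ofReal_sum_of_nonneg (fun k _ => hα0 k), hsum, ENNReal.ofReal_one]
  -- each fiber is null measurable
  have hnm : ∀ k, NullMeasurableSet (A k) P := by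
    intro k
    apply nullMeasurableSet_of_compl
    have hsub : (A k)ᶜ ⊆ ⋃ k' ∈ Finset.univ.erase k, A k' := by
      intro ω hω
      simp only [Set.mem_iUnion]
      exact ⟨f ω, by simp [hA]; exact fun h => hω (by simpa [hA, Set.mem_compl_iff] using h.symm ▸ rfl), rfl⟩
    have hle : P ((A k)ᶜ) ≤ ∑ k' ∈ Finset.univ.erase k, P (A k') :=
      le_trans (measure_mono hsub) (measure_biUnion_finset_le _ _)
    have hge : (1 : ENNReal) ≤ P (A k) + P ((A k)ᶜ) := by
      rw [← measure_univ (μ := P), ← Set.union_compl_self (A k)]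
      exact measure_union_le _ _
    have hub : P (A k) + P ((A k)ᶜ) ≤ 1 := by
      calc P (A k) + P ((A k)ᶜ) ≤ P (A k) + ∑ k' ∈ Finset.univ.erase k, P (A k') := by
            exact add_le_add_right hle _
        _ = ∑ k' : Fin m, P (A k') := by
            rw [add_comm, Finset.sum_erase_add _ _ (Finset.mem_univ k)]
        _ = 1 := (Finset.sum_congr rfl fun k' _ => hf k').trans hofsum
    exact le_antisymm hub hge
  -- measurable subsets
  choose u husub humeas huae using fun k => (hnm k).exists_measurable_subset_ae_eq
  have huinj : ∀ (a b : Fin m) (ω : Ω), ω ∈ u a → ω ∈ u b → a = b := by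
    intro a b ω ha hb
    by_contra hab
    have : ω ∈ A a ∩ A b := ⟨husub a ha, husub b hb⟩
    rw [hAdisj a b hab] at this
    exact this
  classical
  set d : Fin m := ⟨0, hm⟩ with hd
  set g : Ω → Fin m := fun ω => if h : ∃ k, ω ∈ u k then h.choose else d with hg
  have hgmeas : Measurable g := by
    apply measurable_to_countable'
    intro k
    have : g ⁻¹' {k} = u k ∪ ((⋃ k', u k')ᶜ ∩ {ω | d = k}) := by
      ext ω
      simp only [Set.mem_preimage, Set.mem_singleton_iff, Set.mem_union, Set.mem_inter_iff,
        Set.mem_compl_iff, Set.mem_iUnion, Set.mem_setOf_eq, hg]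
      constructor
      · intro hgk
        by_cases h : ∃ k', ω ∈ u k'
        · left
          rw [dif_pos h] at hgk
          exact hgk ▸ h.choose_spec
        · right
          rw [dif_neg h] at hgk
          exact ⟨fun ⟨k', hk'⟩ => h ⟨k', hk'⟩, hgk⟩
      · rintro (hk | ⟨hno, hdk⟩)
        · have h : ∃ k', ω ∈ u k' := ⟨k, hk⟩
          rw [dif_pos h]
          exact huinj _ _ ω h.choose_spec hk
        · rw [dif_neg (fun ⟨k', hk'⟩ => hno ⟨k', hk'⟩)]
          exact hdk
    rw [this]
    exact (humeas k).union ((MeasurableSet.iUnion (fun k' => humeas k')).compl.inter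
      (by by_cases h : d = k <;> simp [h]))
  refine ⟨g, hgmeas, ?_⟩
  have hae : ∀ᵐ ω ∂P, ∀ k, (ω ∈ u k ↔ ω ∈ A k) := by
    rw [ae_all_iff]
    intro k
    exact Filter.eventuallyEq_set.mp (huae k)
  filter_upwards [hae] with ω hω
  have hωA : ω ∈ A (f ω) := rfl
  have hωu : ω ∈ u (f ω) := (hω (f ω)).mpr hωA
  have h : ∃ k, ω ∈ u k := ⟨f ω, hωu⟩
  rw [hg]
  simp only [dif_pos h]
  exact (huinj _ _ ω h.choose_spec hωu).symm ▸ rfl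

lemma iIndepFun_congr_ae {ι : Type*} {β : ι → Type*} [mβ : ∀ i, MeasurableSpace (β i)]
    {f g : ∀ i, Ω → β i} (h : iIndepFun f P) (hfg : ∀ i, f i =ᵐ[P] g i) :
    iIndepFun g P := by
  rw [iIndepFun_iff_measure_inter_preimage_eq_mul] at h ⊢
  intro S sets hsets
  have hpre : ∀ i, P (g i ⁻¹' sets i) = P (f i ⁻¹' sets i) := by
    intro i
    apply measure_congr
    rw [Filter.eventuallyEq_set]
    filter_upwards [hfg i] with ω hω
    simp [Set.mem_preimage, hω]
  have hint : P (⋂ i ∈ S, g i ⁻¹' sets i) = P (⋂ i ∈ S, f i ⁻¹' sets i) := by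
    apply measure_congr
    rw [Filter.eventuallyEq_set]
    have : ∀ᵐ ω ∂P, ∀ i ∈ S, f i ω = g i ω :=
      (ae_ball_iff S.countable_toSet).mpr fun i _ => hfg i
    filter_upwards [this] with ω hω
    simp only [Set.mem_iInter, Set.mem_preimage]
    exact ⟨fun hgi i hi => (hω i hi) ▸ hgi i hi, fun hfi i hi => (hω i hi) ▸ hfi i hi⟩
  rw [hint, h S hsets]
  exact Finset.prod_congr rfl fun i _ => (hpre i).symm

lemma integrable_comp_fin [IsProbabilityMeasure P] {m : ℕ} {I : Ω → Fin m}
    (hI : Measurable I) (f : Fin m → ℝ) : Integrable (fun ω => f (I ω)) P := by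
  refine Integrable.mono' (integrable_const (∑ k, |f k|))
    ((Measurable.of_discrete.comp hI).aestronglyMeasurable) ?_
  refine Filter.Eventually.of_forall fun ω => ?_
  rw [Real.norm_eq_abs]
  exact Finset.single_le_sum (f := fun k => |f k|) (fun k _ => abs_nonneg _) (Finset.mem_univ (I ω))

lemma integral_comp_fin [IsProbabilityMeasure P] {m : ℕ} {I : Ω → Fin m}
    (hI : Measurable I) (α : Fin m → ℝ) (hα0 : ∀ k, 0 ≤ α k)
    (hP : ∀ k, P {ω | I ω = k} = ENNReal.ofReal (α k)) (f : Fin m → ℝ) :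
    ∫ ω, f (I ω) ∂P = ∑ k, α k * f k := by
  have hdecomp : (fun ω => f (I ω))
      = fun ω => ∑ k, Set.indicator {ω | I ω = k} (fun _ => f k) ω := by
    funext ω
    rw [Finset.sum_congr rfl (fun k _ => Set.indicator_apply _ _ _)]
    simp only [Set.mem_setOf_eq]
    rw [Finset.sum_ite_eq (Finset.univ) (I ω) f]
    simp
  rw [hdecomp, integral_finset_sum]
  · refine Finset.sum_congr rfl fun k _ => ?_
    have hms : MeasurableSet {ω | I ω = k} := hI (measurableSet_singleton k)
    rw [integral_indicator_const (f k) hms, measureReal_def, hP k, ENNReal.toReal_ofReal (hα0 k), smul_eq_mul]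
  · intro k _
    exact (integrable_const (f k)).indicator (hI (measurableSet_singleton k))


variable {Ω : Type*} [MeasurableSpace Ω] {P : Measure Ω} [IsProbabilityMeasure P]

lemma integrable_pow_le {X : Ω → ℝ} (hm : AEStronglyMeasurable X P)
    (h4 : Integrable (fun ω => X ω ^ 4) P) {k : ℕ} (hk : k ≤ 4) :
    Integrable (fun ω => X ω ^ k) P := by
  refine Integrable.mono' (h4.add (integrable_const 1)) (hm.pow k) ?_
  refine Filter.Eventually.of_forall fun ω => ?_
  rw [Real.norm_eq_abs, abs_pow]
  rcases le_total (|X ω|) 1 with h | h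
  · calc |X ω| ^ k ≤ 1 := pow_le_one₀ (abs_nonneg _) h
      _ ≤ X ω ^ 4 + 1 := by have h4 : (0:ℝ) ≤ X ω ^ 4 := by positivity
                            linarith
  · calc |X ω| ^ k ≤ |X ω| ^ 4 := pow_le_pow_right₀ h hk
      _ = X ω ^ 4 := by rw [← abs_pow]; exact abs_of_nonneg (by positivity)
      _ ≤ X ω ^ 4 + 1 := by linarith

lemma integrable_pow4_add {X Y : Ω → ℝ} (hmX : AEStronglyMeasurable X P)
    (hmY : AEStronglyMeasurable Y P) (hX : Integrable (fun ω => X ω ^ 4) P)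
    (hY : Integrable (fun ω => Y ω ^ 4) P) :
    Integrable (fun ω => (X ω + Y ω) ^ 4) P := by
  refine Integrable.mono' ((hX.add hY).const_mul 8) ((hmX.add hmY).pow 4) ?_
  refine Filter.Eventually.of_forall fun ω => ?_
  rw [Real.norm_eq_abs, abs_of_nonneg (by positivity)]
  simp only [Pi.add_apply]
  nlinarith [sq_nonneg ((X ω - Y ω) ^ 2), sq_nonneg (X ω ^ 2 - Y ω ^ 2)]

set_option maxHeartbeats 1000000 in
lemma moments_add {A B : Ω → ℝ} (hmA : AEStronglyMeasurable A P)
    (hmB : AEStronglyMeasurable B P) (hA4 : Integrable (fun ω => A ω ^ 4) P)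
    (hB4 : Integrable (fun ω => B ω ^ 4) P) (hAB : IndepFun A B P) :
    Integrable (fun ω => (A ω + B ω) ^ 4) P ∧
    (∫ ω, (A ω + B ω) ∂P = (∫ ω, A ω ∂P) + ∫ ω, B ω ∂P) ∧
    (∫ ω, (A ω + B ω) ^ 2 ∂P
      = (∫ ω, A ω ^ 2 ∂P) + 2 * ((∫ ω, A ω ∂P) * ∫ ω, B ω ∂P) + ∫ ω, B ω ^ 2 ∂P) ∧
    (∫ ω, (A ω + B ω) ^ 3 ∂P
      = (∫ ω, A ω ^ 3 ∂P) + 3 * ((∫ ω, A ω ^ 2 ∂P) * ∫ ω, B ω ∂P)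
        + 3 * ((∫ ω, A ω ∂P) * ∫ ω, B ω ^ 2 ∂P) + ∫ ω, B ω ^ 3 ∂P) ∧
    (∫ ω, (A ω + B ω) ^ 4 ∂P
      = (∫ ω, A ω ^ 4 ∂P) + 4 * ((∫ ω, A ω ^ 3 ∂P) * ∫ ω, B ω ∂P)
        + 6 * ((∫ ω, A ω ^ 2 ∂P) * ∫ ω, B ω ^ 2 ∂P)
        + 4 * ((∫ ω, A ω ∂P) * ∫ ω, B ω ^ 3 ∂P) + ∫ ω, B ω ^ 4 ∂P) := by
  have hip : ∀ j k : ℕ, j ≤ 4 → k ≤ 4 →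
      Integrable (fun ω => A ω ^ j * B ω ^ k) P ∧
      (∫ ω, A ω ^ j * B ω ^ k ∂P = (∫ ω, A ω ^ j ∂P) * ∫ ω, B ω ^ k ∂P) := by
    intro j k hj hk
    have hIndjk : IndepFun (fun ω => A ω ^ j) (fun ω => B ω ^ k) P :=
      hAB.comp (measurable_id.pow_const j) (measurable_id.pow_const k)
    have hIA := integrable_pow_le hmA hA4 hj
    have hIB := integrable_pow_le hmB hB4 hk
    constructor
    · exact hIndjk.integrable_mul hIA hIB
    · exact hIndjk.integral_fun_mul_eq_mul_integral hIA.1 hIB.1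
  have hI : ∀ j k : ℕ, j ≤ 4 → k ≤ 4 → Integrable (fun ω => A ω ^ j * B ω ^ k) P :=
    fun j k hj hk => (hip j k hj hk).1
  have hE : ∀ j k : ℕ, j ≤ 4 → k ≤ 4 →
      (∫ ω, A ω ^ j * B ω ^ k ∂P = (∫ ω, A ω ^ j ∂P) * ∫ ω, B ω ^ k ∂P) :=
    fun j k hj hk => (hip j k hj hk).2
  have hIA : ∀ j : ℕ, j ≤ 4 → Integrable (fun ω => A ω ^ j) P :=
    fun j hj => integrable_pow_le hmA hA4 hj
  have hIB : ∀ j : ℕ, j ≤ 4 → Integrable (fun ω => B ω ^ j) P :=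
    fun j hj => integrable_pow_le hmB hB4 hj
  have hIA1 : Integrable A P := by simpa using hIA 1 (by norm_num)
  have hIB1 : Integrable B P := by simpa using hIB 1 (by norm_num)
  refine ⟨integrable_pow4_add hmA hmB hA4 hB4, integral_add hIA1 hIB1, ?_, ?_, ?_⟩
  · have e2 : (fun ω => (A ω + B ω) ^ 2)
        = fun ω => A ω ^ 2 + (2 * (A ω ^ 1 * B ω ^ 1) + B ω ^ 2) := by
      funext ω; ring
    rw [e2, integral_add, integral_add, integral_const_mul,
      hE 1 1 (by norm_num) (by norm_num)]
    · simp only [pow_one]; ring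
    all_goals repeat'
      first
      | apply Integrable.add
      | apply Integrable.const_mul
      | exact hIA _ (by norm_num)
      | exact hIB _ (by norm_num)
      | exact hI _ _ (by norm_num) (by norm_num)
  · have e3 : (fun ω => (A ω + B ω) ^ 3)
        = fun ω => A ω ^ 3 + (3 * (A ω ^ 2 * B ω ^ 1)
            + (3 * (A ω ^ 1 * B ω ^ 2) + B ω ^ 3)) := by
      funext ω; ring
    rw [e3, integral_add, integral_add, integral_add, integral_const_mul, integral_const_mul,
      hE 2 1 (by norm_num) (by norm_num), hE 1 2 (by norm_num) (by norm_num)]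
    · simp only [pow_one]; ring
    all_goals repeat'
      first
      | apply Integrable.add
      | apply Integrable.const_mul
      | exact hIA _ (by norm_num)
      | exact hIB _ (by norm_num)
      | exact hI _ _ (by norm_num) (by norm_num)
  · have e4 : (fun ω => (A ω + B ω) ^ 4)
        = fun ω => A ω ^ 4 + (4 * (A ω ^ 3 * B ω ^ 1)
            + (6 * (A ω ^ 2 * B ω ^ 2) + (4 * (A ω ^ 1 * B ω ^ 3) + B ω ^ 4))) := by
      funext ω; ring
    rw [e4, integral_add, integral_add, integral_add, integral_add,
      integral_const_mul, integral_const_mul, integral_const_mul,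
      hE 3 1 (by norm_num) (by norm_num), hE 2 2 (by norm_num) (by norm_num),
      hE 1 3 (by norm_num) (by norm_num)]
    · simp only [pow_one]; ring
    all_goals repeat'
      first
      | apply Integrable.add
      | apply Integrable.const_mul
      | exact hIA _ (by norm_num)
      | exact hIB _ (by norm_num)
      | exact hI _ _ (by norm_num) (by norm_num)

lemma sum_moments {ι : Type*} [DecidableEq ι] {U : ι → Ω → ℝ}
    (hm : ∀ i, AEStronglyMeasurable (U i) P)
    (h4 : ∀ i, Integrable (fun ω => U i ω ^ 4) P)
    (h1 : ∀ i, ∫ ω, U i ω ∂P = 0)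
    (h3 : ∀ i, ∫ ω, U i ω ^ 3 ∂P = 0)
    (hind : ∀ (t : Finset ι) (i : ι), i ∉ t → IndepFun (U i) (fun ω => ∑ j ∈ t, U j ω) P)
    (s : Finset ι) :
    Integrable (fun ω => (∑ j ∈ s, U j ω) ^ 4) P ∧
    (∫ ω, (∑ j ∈ s, U j ω) ∂P = 0) ∧
    (∫ ω, (∑ j ∈ s, U j ω) ^ 3 ∂P = 0) ∧
    (∫ ω, (∑ j ∈ s, U j ω) ^ 2 ∂P = ∑ j ∈ s, ∫ ω, U j ω ^ 2 ∂P) ∧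
    (∫ ω, (∑ j ∈ s, U j ω) ^ 4 ∂P = (∑ j ∈ s, ∫ ω, U j ω ^ 4 ∂P)
      + 3 * ((∑ j ∈ s, ∫ ω, U j ω ^ 2 ∂P) ^ 2 - ∑ j ∈ s, (∫ ω, U j ω ^ 2 ∂P) ^ 2)) := by
  classical
  induction s using Finset.induction_on with
  | empty =>
      refine ⟨by simpa using (integrable_const (0:ℝ)), ?_, ?_, ?_, ?_⟩ <;> simp
  | @insert i s hi IH =>
      obtain ⟨IH4, IH1, IH3, IH2, IHf⟩ := IH
      have hmB : AEStronglyMeasurable (fun ω => ∑ j ∈ s, U j ω) P := by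
        apply Finset.aestronglyMeasurable_fun_sum
        exact fun j _ => hm j
      have hmoments := moments_add (hm i) hmB (h4 i) IH4 (hind s i hi)
      obtain ⟨hInt, hm1, hm2, hm3, hm4⟩ := hmoments
      have hsum : ∀ ω, (∑ j ∈ insert i s, U j ω) = U i ω + ∑ j ∈ s, U j ω :=
        fun ω => Finset.sum_insert hi
      have hfun : ∀ p : ℕ, (fun ω => (∑ j ∈ insert i s, U j ω) ^ p)
          = fun ω => (U i ω + ∑ j ∈ s, U j ω) ^ p := by
        intro p; funext ω; rw [hsum ω]
      refine ⟨?_, ?_, ?_, ?_, ?_⟩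
      · rw [hfun 4]; exact hInt
      · have : (fun ω => ∑ j ∈ insert i s, U j ω)
            = fun ω => U i ω + ∑ j ∈ s, U j ω := funext hsum
        rw [this, hm1, h1 i, IH1]; ring
      · rw [hfun 3, hm3, h1 i, h3 i, IH1, IH3]; ring
      · rw [hfun 2, hm2, h1 i, IH1, IH2, Finset.sum_insert hi]; ring
      · rw [hfun 4, hm4, h1 i, h3 i, IH1, IH3, IH2, IHf,
          Finset.sum_insert hi, Finset.sum_insert hi, Finset.sum_insert hi]
        ring


lemma gauss_facts {Ω : Type*} [MeasurableSpace Ω] {P : Measure Ω} {W : Ω → ℝ}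
    (hW : AEMeasurable W P) (hlaw : Measure.map W P = gaussianReal 0 1) (k : ℕ) :
    Integrable (fun ω => W ω ^ k) P ∧ ∫ ω, W ω ^ k ∂P = ∫ x, x ^ k ∂(gaussianReal 0 1) := by
  have hasm : AEStronglyMeasurable (fun x : ℝ => x ^ k) (Measure.map W P) :=
    (measurable_id.pow_const k).aestronglyMeasurable
  constructor
  · have h := (integrable_map_measure hasm hW).1 (by rw [hlaw]; exact gauss_integrable_pow k)
    simpa [Function.comp_def] using h
  · rw [← integral_map hW hasm, hlaw]

end FMSAux
end FMSAuxHelpers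

set_option maxHeartbeats 2000000 in
/-- **Fourth moment of the projection of the FMS mixture.**
For every unit vector `v ∈ ℝ^n`,
`E[⟪v,z⟫⁴] = 3((l−1)/l)(∑_j α_j d_j)² + (3/l)∑_j α_j d_j²` with
`d_j = (1−γ) + γ⟪v,q_j⟫²`. -/
theorem fms_projected_fourth_moment
    {n m l : ℕ} (hn : 0 < n) (hm : 0 < m) (hl : 0 < l)
    (q : Fin m → EuclideanSpace ℝ (Fin n))
    (α : Fin m → ℝ) (hα : ∀ k, α k ∈ Set.Ioo (0 : ℝ) 1) (hαsum : ∑ k, α k = 1)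
    (γ : ℝ) (hγ : γ ∈ Set.Ioo (0 : ℝ) 1)
    {Ω : Type*} [MeasurableSpace Ω] (P : Measure Ω) [IsProbabilityMeasure P]
    (z₀ : Ω → EuclideanSpace ℝ (Fin n)) (zs : Fin l → Ω → ℝ) (idx : Fin l → Ω → Fin m)
    (hz₀ : ∀ i : Fin n, Measure.map (fun ω => z₀ ω i) P = gaussianReal 0 1)
    (hzs : ∀ j : Fin l, Measure.map (zs j) P = gaussianReal 0 1)
    (hidx : ∀ (j : Fin l) (k : Fin m), P {ω | idx j ω = k} = ENNReal.ofReal (α k))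
    (hindep : iIndepFun
      (FMSFamily z₀ zs idx) P)
    (z : Ω → EuclideanSpace ℝ (Fin n))
    (hz : ∀ ω, z ω = Real.sqrt (1 - γ) • z₀ ω
        + Real.sqrt (γ / l) • ∑ j : Fin l, zs j ω • q (idx j ω))
    (v : EuclideanSpace ℝ (Fin n)) (hv : ‖v‖ = 1) :
    ∫ ω, ⟪v, z ω⟫ ^ 4 ∂P
      = 3 * (((l : ℝ) - 1) / l)
            * (∑ j : Fin m, α j * ((1 - γ) + γ * ⟪v, q j⟫ ^ 2)) ^ 2
        + 3 / l * ∑ j : Fin m, α j * ((1 - γ) + γ * ⟪v, q j⟫ ^ 2) ^ 2 := by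
  classical
  obtain ⟨hγ0, hγ1⟩ := hγ
  have hα0 : ∀ k, 0 ≤ α k := fun k => (hα k).1.le
  have hl0 : (0:ℝ) < l := by exact_mod_cast hl
  -- abbreviations
  set a : ℝ := Real.sqrt (1 - γ) with ha_def
  set b : ℝ := Real.sqrt (γ / l) with hb_def
  have ha2 : a ^ 2 = 1 - γ := Real.sq_sqrt (by linarith)
  have hb2 : b ^ 2 = γ / l := Real.sq_sqrt (by positivity)
  set c : Fin m → ℝ := fun k => ⟪v, q k⟫ with hc_def
  -- measurable representatives
  have hz₀m : ∀ i : Fin n, AEMeasurable (fun ω => z₀ ω i) P := fun i =>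
    aemeasurable_of_map_neZero (by rw [hz₀ i]; infer_instance)
  have hzsm : ∀ j : Fin l, AEMeasurable (zs j) P := fun j =>
    aemeasurable_of_map_neZero (by rw [hzs j]; infer_instance)
  have hidxm : ∀ j : Fin l, AEMeasurable (idx j) P := fun j =>
    FMSAux.aemeasurable_fin_of_fiber_measure hm α hα0 hαsum (hidx j)
  set Z : Fin n → Ω → ℝ := fun i => (hz₀m i).mk _ with hZ_def
  set Y : Fin l → Ω → ℝ := fun j => (hzsm j).mk _ with hY_def
  set I : Fin l → Ω → Fin m := fun j => (hidxm j).mk _ with hI_def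
  have hZmeas : ∀ i, Measurable (Z i) := fun i => (hz₀m i).measurable_mk
  have hYmeas : ∀ j, Measurable (Y j) := fun j => (hzsm j).measurable_mk
  have hImeas : ∀ j, Measurable (I j) := fun j => (hidxm j).measurable_mk
  have hZae : ∀ i, (fun ω => z₀ ω i) =ᵐ[P] Z i := fun i => (hz₀m i).ae_eq_mk
  have hYae : ∀ j, zs j =ᵐ[P] Y j := fun j => (hzsm j).ae_eq_mk
  have hIae : ∀ j, idx j =ᵐ[P] I j := fun j => (hidxm j).ae_eq_mk
  let F' : ∀ k : FMSIndex n l, Ω → FMSCodomain n m l k := fun k =>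
    match k with
    | Sum.inl i => Z i
    | Sum.inr (Sum.inl j) => Y j
    | Sum.inr (Sum.inr j) => I j
  have hmeas' : ∀ k, Measurable (F' k) := by
    rintro (i | j | j)
    · exact hZmeas i
    · exact hYmeas j
    · exact hImeas j
  have hindep' : iIndepFun F' P := by
    refine FMSAux.iIndepFun_congr_ae hindep ?_
    rintro (i | j | j)
    · exact hZae i
    · exact hYae j
    · exact hIae j
  have hZlaw : ∀ i, Measure.map (Z i) P = gaussianReal 0 1 := fun i => by
    rw [← Measure.map_congr (hZae i)]; exact hz₀ i
  have hYlaw : ∀ j, Measure.map (Y j) P = gaussianReal 0 1 := fun j => by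
    rw [← Measure.map_congr (hYae j)]; exact hzs j
  have hIlaw : ∀ j k, P {ω | I j ω = k} = ENNReal.ofReal (α k) := fun j k => by
    rw [← hidx j k]
    apply measure_congr
    rw [Filter.eventuallyEq_set]
    filter_upwards [hIae j] with ω hω
    simp only [Set.mem_setOf_eq, hω]
  -- the two building blocks
  set UX : Fin n → Ω → ℝ := fun i ω => v i * Z i ω with hUX_def
  set UT : Fin l → Ω → ℝ := fun j ω => Y j ω * c (I j ω) with hUT_def
  set X : Ω → ℝ := fun ω => ∑ i, UX i ω with hX_def
  set T : Ω → ℝ := fun ω => ∑ j, UT j ω with hT_def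
  -- reduce the integrand to the measurable representatives
  have hinner : ∀ ω, (⟪v, z ω⟫ : ℝ)
      = a * (∑ i, v i * z₀ ω i) + b * ∑ j, zs j ω * c (idx j ω) := by
    intro ω
    have hZ0 : (⟪v, z₀ ω⟫:ℝ) = ∑ i, v i * z₀ ω i := by
      simp [PiLp.inner_apply, RCLike.inner_apply, conj_trivial, mul_comm]
    rw [hz ω, inner_add_right, real_inner_smul_right, real_inner_smul_right, inner_sum, hZ0]
    simp only [real_inner_smul_right, hc_def]
  have hae_main : (fun ω => (⟪v, z ω⟫:ℝ) ^ 4) =ᵐ[P] fun ω => (a * X ω + b * T ω) ^ 4 := by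
    have h1 : ∀ᵐ ω ∂P, ∀ i, z₀ ω i = Z i ω := ae_all_iff.2 hZae
    have h2 : ∀ᵐ ω ∂P, ∀ j, zs j ω = Y j ω := ae_all_iff.2 hYae
    have h3 : ∀ᵐ ω ∂P, ∀ j, idx j ω = I j ω := ae_all_iff.2 hIae
    filter_upwards [h1, h2, h3] with ω e1 e2 e3
    rw [hinner ω]
    have hx : (∑ i, v i * z₀ ω i) = X ω := by
      rw [hX_def]
      exact Finset.sum_congr rfl fun i _ => by rw [e1 i, hUX_def]
    have ht : (∑ j, zs j ω * c (idx j ω)) = T ω := by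
      rw [hT_def]
      exact Finset.sum_congr rfl fun j _ => by rw [e2 j, e3 j, hUT_def]
    rw [hx, ht]
  rw [integral_congr_ae hae_main]
  -- Gaussian facts
  have hZfact : ∀ (i : Fin n) (k : ℕ), Integrable (fun ω => Z i ω ^ k) P ∧
      ∫ ω, Z i ω ^ k ∂P = ∫ x, x ^ k ∂(gaussianReal 0 1) :=
    fun i k => FMSAux.gauss_facts (hZmeas i).aemeasurable (hZlaw i) k
  have hYfact : ∀ (j : Fin l) (k : ℕ), Integrable (fun ω => Y j ω ^ k) P ∧
      ∫ ω, Y j ω ^ k ∂P = ∫ x, x ^ k ∂(gaussianReal 0 1) :=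
    fun j k => FMSAux.gauss_facts (hYmeas j).aemeasurable (hYlaw j) k
  -- X-family facts
  have hUXm : ∀ i, AEStronglyMeasurable (UX i) P :=
    fun i => ((hZmeas i).const_mul (v i)).aestronglyMeasurable
  have hUXpow : ∀ (i : Fin n) (k : ℕ),
      Integrable (fun ω => UX i ω ^ k) P ∧
      ∫ ω, UX i ω ^ k ∂P = v i ^ k * ∫ x, x ^ k ∂(gaussianReal 0 1) := by
    intro i k
    have he : (fun ω => UX i ω ^ k) = fun ω => v i ^ k * Z i ω ^ k := by
      funext ω; rw [hUX_def]; ring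
    constructor
    · rw [he]; exact (hZfact i k).1.const_mul _
    · rw [he, integral_const_mul, (hZfact i k).2]
  have hUX4 : ∀ i, Integrable (fun ω => UX i ω ^ 4) P := fun i => (hUXpow i 4).1
  have hUX1 : ∀ i, ∫ ω, UX i ω ∂P = 0 := by
    intro i
    have h := (hUXpow i 1).2
    rw [FMSAux.gauss_moment_one, mul_zero] at h
    simpa using h
  have hUX3 : ∀ i, ∫ ω, UX i ω ^ 3 ∂P = 0 := by
    intro i
    rw [(hUXpow i 3).2, FMSAux.gauss_moment_three, mul_zero]
  have hUX2v : ∀ i, ∫ ω, UX i ω ^ 2 ∂P = v i ^ 2 := by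
    intro i
    rw [(hUXpow i 2).2, FMSAux.gauss_moment_two, mul_one]
  have hUX4v : ∀ i, ∫ ω, UX i ω ^ 4 ∂P = 3 * v i ^ 4 := by
    intro i
    rw [(hUXpow i 4).2, FMSAux.gauss_moment_four]; ring
  have hindX : ∀ (t : Finset (Fin n)) (i : Fin n), i ∉ t →
      IndepFun (UX i) (fun ω => ∑ j ∈ t, UX j ω) P := by
    intro t i hit
    have hdisj : Disjoint ({Sum.inl i} : Finset (FMSIndex n l)) (t.image Sum.inl) := by
      simp only [Finset.disjoint_singleton_left, Finset.mem_image, not_exists]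
      rintro j ⟨hj, hji⟩
      exact hit ((Sum.inl.injEq _ _).mp hji ▸ hj)
    have base := hindep'.indepFun_finset {Sum.inl i} (t.image Sum.inl) hdisj hmeas'
    have h1 := base.comp
      (φ := fun x : (∀ k : ({Sum.inl i} : Finset (FMSIndex n l)), FMSCodomain n m l k) =>
        v i * (show ℝ from x ⟨Sum.inl i, Finset.mem_singleton_self _⟩))
      (ψ := fun x : (∀ k : (t.image Sum.inl : Finset (FMSIndex n l)), FMSCodomain n m l k) =>
        ∑ j ∈ t.attach, v j * (show ℝ from x ⟨Sum.inl j, Finset.mem_image_of_mem _ j.2⟩))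
      (by
        have hx : Measurable (fun x : (∀ k : ({Sum.inl i} : Finset (FMSIndex n l)),
            FMSCodomain n m l k) =>
              (show ℝ from x ⟨Sum.inl i, Finset.mem_singleton_self _⟩)) :=
          measurable_pi_apply _
        exact hx.const_mul _)
      (by
        refine Finset.measurable_sum _ fun j _ => ?_
        have hx : Measurable (fun x : (∀ k : (t.image Sum.inl : Finset (FMSIndex n l)),
            FMSCodomain n m l k) =>
              (show ℝ from x ⟨Sum.inl j, Finset.mem_image_of_mem _ j.2⟩)) :=
          measurable_pi_apply _
        exact hx.const_mul _)
    have heq : ((fun x : (∀ k : (t.image Sum.inl : Finset (FMSIndex n l)), FMSCodomain n m l k) =>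
        ∑ j ∈ t.attach, v j * (show ℝ from x ⟨Sum.inl j, Finset.mem_image_of_mem _ j.2⟩))
          ∘ (fun ω (k : (t.image Sum.inl : Finset (FMSIndex n l))) => F' k ω))
        = fun ω => ∑ j ∈ t, UX j ω := by
      funext ω
      exact Finset.sum_attach t fun j => v j * Z j ω
    rw [heq] at h1
    exact h1
  obtain ⟨hX4int, hX1, hX3, hX2, hX4⟩ :=
    FMSAux.sum_moments hUXm hUX4 hUX1 hUX3 hindX Finset.univ
  -- value of the X moments
  have hv2 : (∑ i, v i ^ 2) = 1 := by
    have h := real_inner_self_eq_norm_sq v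
    rw [hv] at h
    simp only [PiLp.inner_apply, RCLike.inner_apply, conj_trivial, one_pow] at h
    rw [← h]
    exact Finset.sum_congr rfl fun i _ => (sq (v i)) ▸ by ring
  have hX2v : ∫ ω, X ω ^ 2 ∂P = 1 := by
    rw [hX_def] at *
    rw [hX2]
    rw [Finset.sum_congr rfl fun i _ => hUX2v i, hv2]
  have hX4v : ∫ ω, X ω ^ 4 ∂P = 3 := by
    rw [hX_def] at *
    rw [hX4, Finset.sum_congr rfl fun i _ => hUX4v i,
      Finset.sum_congr rfl fun i _ => hUX2v i, hv2,
      Finset.sum_congr rfl (fun i _ => congrArg (· ^ 2) (hUX2v i))]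
    have h44 : ∑ i, (v i ^ 2) ^ 2 = ∑ i, v i ^ 4 :=
      Finset.sum_congr rfl fun i _ => by ring
    rw [h44, ← Finset.mul_sum]
    ring
  -- T-family facts
  have hUTm : ∀ j, AEStronglyMeasurable (UT j) P := fun j =>
    ((hYmeas j).mul ((Measurable.of_discrete (f := c)).comp (hImeas j))).aestronglyMeasurable
  have hWint : ∀ (j : Fin l) (f : Fin m → ℝ), Integrable (fun ω => f (I j ω)) P :=
    fun j f => FMSAux.integrable_comp_fin (hImeas j) f
  have hWval : ∀ (j : Fin l) (f : Fin m → ℝ), ∫ ω, f (I j ω) ∂P = ∑ k, α k * f k :=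
    fun j f => FMSAux.integral_comp_fin (hImeas j) α hα0 (hIlaw j) f
  have hUTpow : ∀ (j : Fin l) (k : ℕ),
      Integrable (fun ω => UT j ω ^ k) P ∧
      ∫ ω, UT j ω ^ k ∂P
        = (∫ x, x ^ k ∂(gaussianReal 0 1)) * ∑ k', α k' * c k' ^ k := by
    intro j k
    have hne : (Sum.inr (Sum.inl j) : FMSIndex n l) ≠ Sum.inr (Sum.inr j) := by simp
    have hIndk : IndepFun (fun ω => Y j ω ^ k) (fun ω => c (I j ω) ^ k) P := by
      have h0 : IndepFun (Y j) (I j) P := hindep'.indepFun (f := F') hne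
      exact h0.comp (measurable_id.pow_const k)
        (Measurable.of_discrete (f := fun i => c i ^ k))
    have hIY := (hYfact j k).1
    have hIW : Integrable (fun ω => c (I j ω) ^ k) P := hWint j (fun i => c i ^ k)
    have hmul := hIndk.integral_fun_mul_eq_mul_integral hIY.1 hIW.1
    have hintm := hIndk.integrable_mul hIY hIW
    constructor
    · refine hintm.congr (Filter.Eventually.of_forall fun ω => ?_)
      simp only [Pi.mul_apply, hUT_def]
      ring
    · calc ∫ ω, UT j ω ^ k ∂P = ∫ ω, Y j ω ^ k * c (I j ω) ^ k ∂P := by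
            congr 1; funext ω; rw [hUT_def]; ring
        _ = (∫ ω, Y j ω ^ k ∂P) * ∫ ω, c (I j ω) ^ k ∂P := hmul
        _ = (∫ x, x ^ k ∂(gaussianReal 0 1)) * ∑ k', α k' * c k' ^ k := by
            rw [(hYfact j k).2, hWval j (fun i => c i ^ k)]
  have hUT4 : ∀ j, Integrable (fun ω => UT j ω ^ 4) P := fun j => (hUTpow j 4).1
  have hUT1 : ∀ j, ∫ ω, UT j ω ∂P = 0 := by
    intro j
    have h := (hUTpow j 1).2
    rw [FMSAux.gauss_moment_one, zero_mul] at h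
    simpa using h
  have hUT3 : ∀ j, ∫ ω, UT j ω ^ 3 ∂P = 0 := by
    intro j
    rw [(hUTpow j 3).2, FMSAux.gauss_moment_three, zero_mul]
  have hUT2v : ∀ j, ∫ ω, UT j ω ^ 2 ∂P = ∑ k', α k' * c k' ^ 2 := by
    intro j
    rw [(hUTpow j 2).2, FMSAux.gauss_moment_two, one_mul]
  have hUT4v : ∀ j, ∫ ω, UT j ω ^ 4 ∂P = 3 * ∑ k', α k' * c k' ^ 4 := by
    intro j
    rw [(hUTpow j 4).2, FMSAux.gauss_moment_four]
  have hindT : ∀ (t : Finset (Fin l)) (j : Fin l), j ∉ t →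
      IndepFun (UT j) (fun ω => ∑ j' ∈ t, UT j' ω) P := by
    intro t j hjt
    set Sl : Finset (FMSIndex n l) := {Sum.inr (Sum.inl j), Sum.inr (Sum.inr j)} with hSl
    set Tr : Finset (FMSIndex n l) :=
      (t.image fun j' => Sum.inr (Sum.inl j')) ∪ (t.image fun j' => Sum.inr (Sum.inr j'))
      with hTr
    have hdisj : Disjoint Sl Tr := by
      rw [Finset.disjoint_left]
      intro k hk hk'
      simp only [hSl, Finset.mem_insert, Finset.mem_singleton] at hk
      simp only [hTr, Finset.mem_union, Finset.mem_image] at hk'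
      rcases hk with rfl | rfl <;>
        rcases hk' with ⟨j', hj', he⟩ | ⟨j', hj', he⟩ <;>
          simp only [Sum.inr.injEq, Sum.inl.injEq] at he <;>
            first
            | exact hjt (he ▸ hj')
            | exact (Sum.inl_ne_inr (he : _)).elim
            | exact (Sum.inr_ne_inl (he : _)).elim
    have base := hindep'.indepFun_finset Sl Tr hdisj hmeas'
    have hmem1 : (Sum.inr (Sum.inl j) : FMSIndex n l) ∈ Sl := by simp [hSl]
    have hmem2 : (Sum.inr (Sum.inr j) : FMSIndex n l) ∈ Sl := by simp [hSl]
    have hmem3 : ∀ j' : {x // x ∈ t}, (Sum.inr (Sum.inl ↑j') : FMSIndex n l) ∈ Tr := fun j' =>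
      Finset.mem_union_left _ (Finset.mem_image_of_mem _ j'.2)
    have hmem4 : ∀ j' : {x // x ∈ t}, (Sum.inr (Sum.inr ↑j') : FMSIndex n l) ∈ Tr := fun j' =>
      Finset.mem_union_right _ (Finset.mem_image_of_mem _ j'.2)
    have h1 := base.comp
      (φ := fun x : (∀ k : Sl, FMSCodomain n m l k) =>
        (show ℝ from x ⟨Sum.inr (Sum.inl j), hmem1⟩)
          * c (show Fin m from x ⟨Sum.inr (Sum.inr j), hmem2⟩))
      (ψ := fun x : (∀ k : Tr, FMSCodomain n m l k) =>
        ∑ j' ∈ t.attach,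
          (show ℝ from x ⟨Sum.inr (Sum.inl j'), hmem3 j'⟩)
            * c (show Fin m from x ⟨Sum.inr (Sum.inr j'), hmem4 j'⟩))
      (by
        have hx : Measurable (fun x : (∀ k : Sl, FMSCodomain n m l k) =>
            (show ℝ from x ⟨Sum.inr (Sum.inl j), hmem1⟩)) := measurable_pi_apply _
        have hy : Measurable (fun x : (∀ k : Sl, FMSCodomain n m l k) =>
            (show Fin m from x ⟨Sum.inr (Sum.inr j), hmem2⟩)) := measurable_pi_apply _
        exact hx.mul ((Measurable.of_discrete (f := c)).comp hy))
      (by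
        refine Finset.measurable_sum _ fun j' _ => ?_
        have hx : Measurable (fun x : (∀ k : Tr, FMSCodomain n m l k) =>
            (show ℝ from x ⟨Sum.inr (Sum.inl j'), hmem3 j'⟩)) := measurable_pi_apply _
        have hy : Measurable (fun x : (∀ k : Tr, FMSCodomain n m l k) =>
            (show Fin m from x ⟨Sum.inr (Sum.inr j'), hmem4 j'⟩)) := measurable_pi_apply _
        exact hx.mul ((Measurable.of_discrete (f := c)).comp hy))
    have heq : ((fun x : (∀ k : Tr, FMSCodomain n m l k) =>
        ∑ j' ∈ t.attach,
          (show ℝ from x ⟨Sum.inr (Sum.inl j'), hmem3 j'⟩)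
            * c (show Fin m from x ⟨Sum.inr (Sum.inr j'), hmem4 j'⟩))
          ∘ (fun ω (k : Tr) => F' k ω))
        = fun ω => ∑ j' ∈ t, UT j' ω := by
      funext ω
      exact Finset.sum_attach t fun j' => Y j' ω * c (I j' ω)
    rw [heq] at h1
    exact h1
  obtain ⟨hT4int, hT1, hT3, hT2, hT4⟩ :=
    FMSAux.sum_moments hUTm hUT4 hUT1 hUT3 hindT Finset.univ
  -- independence of X and T
  have hindXT : IndepFun X T P := by
    set Sx : Finset (FMSIndex n l) := Finset.univ.image Sum.inl with hSx
    set Tr : Finset (FMSIndex n l) :=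
      (Finset.univ.image fun j' : Fin l => Sum.inr (Sum.inl j'))
        ∪ (Finset.univ.image fun j' : Fin l => Sum.inr (Sum.inr j')) with hTr
    have hdisj : Disjoint Sx Tr := by
      rw [Finset.disjoint_left]
      intro k hk hk'
      simp only [hSx, Finset.mem_image] at hk
      simp only [hTr, Finset.mem_union, Finset.mem_image] at hk'
      obtain ⟨i, _, rfl⟩ := hk
      rcases hk' with ⟨j', _, he⟩ | ⟨j', _, he⟩ <;> exact (Sum.inr_ne_inl he).elim
    have base := hindep'.indepFun_finset Sx Tr hdisj hmeas'
    have hmemx : ∀ i : Fin n, (Sum.inl i : FMSIndex n l) ∈ Sx := fun i =>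
      Finset.mem_image_of_mem _ (Finset.mem_univ i)
    have hmem3 : ∀ j' : Fin l, (Sum.inr (Sum.inl j') : FMSIndex n l) ∈ Tr := fun j' =>
      Finset.mem_union_left _ (Finset.mem_image_of_mem _ (Finset.mem_univ j'))
    have hmem4 : ∀ j' : Fin l, (Sum.inr (Sum.inr j') : FMSIndex n l) ∈ Tr := fun j' =>
      Finset.mem_union_right _ (Finset.mem_image_of_mem _ (Finset.mem_univ j'))
    have h1 := base.comp
      (φ := fun x : (∀ k : Sx, FMSCodomain n m l k) =>
        ∑ i : Fin n, v i * (show ℝ from x ⟨Sum.inl i, hmemx i⟩))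
      (ψ := fun x : (∀ k : Tr, FMSCodomain n m l k) =>
        ∑ j' : Fin l,
          (show ℝ from x ⟨Sum.inr (Sum.inl j'), hmem3 j'⟩)
            * c (show Fin m from x ⟨Sum.inr (Sum.inr j'), hmem4 j'⟩))
      (by
        refine Finset.measurable_sum _ fun i _ => ?_
        have hx : Measurable (fun x : (∀ k : Sx, FMSCodomain n m l k) =>
            (show ℝ from x ⟨Sum.inl i, hmemx i⟩)) := measurable_pi_apply _
        exact hx.const_mul _)
      (by
        refine Finset.measurable_sum _ fun j' _ => ?_
        have hx : Measurable (fun x : (∀ k : Tr, FMSCodomain n m l k) =>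
            (show ℝ from x ⟨Sum.inr (Sum.inl j'), hmem3 j'⟩)) := measurable_pi_apply _
        have hy : Measurable (fun x : (∀ k : Tr, FMSCodomain n m l k) =>
            (show Fin m from x ⟨Sum.inr (Sum.inr j'), hmem4 j'⟩)) := measurable_pi_apply _
        exact hx.mul ((Measurable.of_discrete (f := c)).comp hy))
    exact h1
  -- final expansion
  have hXasm : AEStronglyMeasurable X P :=
    Finset.aestronglyMeasurable_fun_sum _ fun i _ => hUXm i
  have hTasm : AEStronglyMeasurable T P :=
    Finset.aestronglyMeasurable_fun_sum _ fun j _ => hUTm j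
  have hindAB : IndepFun (fun ω => a * X ω) (fun ω => b * T ω) P :=
    hindXT.comp (measurable_id.const_mul a) (measurable_id.const_mul b)
  have hApow : ∀ k : ℕ, (fun ω => (a * X ω) ^ k) = fun ω => a ^ k * X ω ^ k := by
    intro k; funext ω; ring
  have hBpow : ∀ k : ℕ, (fun ω => (b * T ω) ^ k) = fun ω => b ^ k * T ω ^ k := by
    intro k; funext ω; ring
  have hA4int : Integrable (fun ω => (a * X ω) ^ 4) P := by
    rw [hApow 4]; exact hX4int.const_mul _
  have hB4int : Integrable (fun ω => (b * T ω) ^ 4) P := by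
    rw [hBpow 4]; exact hT4int.const_mul _
  obtain ⟨_, _, _, _, hexp⟩ := FMSAux.moments_add
    (hXasm.const_mul a) (hTasm.const_mul b) hA4int hB4int hindAB
  rw [hexp]
  -- compute each piece
  have eA1 : ∫ ω, (a * X ω) ∂P = 0 := by
    rw [integral_const_mul, hX1, mul_zero]
  have eA2 : ∫ ω, (a * X ω) ^ 2 ∂P = a ^ 2 * 1 := by
    rw [hApow 2, integral_const_mul, hX2v]
  have eA3 : ∫ ω, (a * X ω) ^ 3 ∂P = 0 := by
    rw [hApow 3, integral_const_mul, hX3, mul_zero]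
  have eA4 : ∫ ω, (a * X ω) ^ 4 ∂P = a ^ 4 * 3 := by
    rw [hApow 4, integral_const_mul, hX4v]
  have eB1 : ∫ ω, (b * T ω) ∂P = 0 := by
    rw [integral_const_mul, hT1, mul_zero]
  have eB2 : ∫ ω, (b * T ω) ^ 2 ∂P = b ^ 2 * ((l : ℝ) * ∑ k', α k' * c k' ^ 2) := by
    rw [hBpow 2, integral_const_mul, hT2,
      Finset.sum_congr rfl fun j _ => hUT2v j]
    simp [Finset.sum_const, Finset.card_univ, nsmul_eq_mul]
  have eB4 : ∫ ω, (b * T ω) ^ 4 ∂P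
      = b ^ 4 * ((l : ℝ) * (3 * ∑ k', α k' * c k' ^ 4)
        + 3 * (((l : ℝ) * ∑ k', α k' * c k' ^ 2) ^ 2
          - (l : ℝ) * (∑ k', α k' * c k' ^ 2) ^ 2)) := by
    rw [hBpow 4, integral_const_mul, hT4,
      Finset.sum_congr rfl fun j _ => hUT4v j,
      Finset.sum_congr rfl fun j _ => hUT2v j,
      Finset.sum_congr rfl fun j _ => congrArg (· ^ 2) (hUT2v j)]
    simp [Finset.sum_const, Finset.card_univ, nsmul_eq_mul]
  rw [eA1, eA2, eA3, eA4, eB1, eB2, eB4]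
  -- rewrite the goal sums
  have hgoal1 : ∑ j, α j * ((1 - γ) + γ * ⟪v, q j⟫ ^ 2)
      = (1 - γ) + γ * ∑ k', α k' * c k' ^ 2 := by
    rw [Finset.sum_congr rfl fun j _ =>
      (show α j * ((1 - γ) + γ * ⟪v, q j⟫ ^ 2)
        = (1 - γ) * α j + γ * (α j * c j ^ 2) from by rw [hc_def]; ring),
      Finset.sum_add_distrib, ← Finset.mul_sum, ← Finset.mul_sum, hαsum, mul_one]
  have hgoal2 : ∑ j, α j * ((1 - γ) + γ * ⟪v, q j⟫ ^ 2) ^ 2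
      = (1 - γ) ^ 2 + 2 * (1 - γ) * γ * (∑ k', α k' * c k' ^ 2)
        + γ ^ 2 * ∑ k', α k' * c k' ^ 4 := by
    rw [Finset.sum_congr rfl fun j _ =>
      (show α j * ((1 - γ) + γ * ⟪v, q j⟫ ^ 2) ^ 2
        = (1 - γ) ^ 2 * α j + (2 * (1 - γ) * γ * (α j * c j ^ 2)
            + γ ^ 2 * (α j * c j ^ 4)) from by rw [hc_def]; ring),
      Finset.sum_add_distrib, Finset.sum_add_distrib,
      ← Finset.mul_sum, ← Finset.mul_sum, ← Finset.mul_sum, hαsum, mul_one]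
    ring
  rw [hgoal1, hgoal2]
  have hb4 : b ^ 4 = (γ / l) ^ 2 := by
    rw [show b ^ 4 = (b ^ 2) ^ 2 from by ring, hb2]
  have ha4 : a ^ 4 = (1 - γ) ^ 2 := by
    rw [show a ^ 4 = (a ^ 2) ^ 2 from by ring, ha2]
  rw [ha2, ha4, hb2, hb4]
  field_simp
  ring

end
end
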